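/- arXiv:1906.06544 — 6 statements merged into one kernel-verified Lean document; each statement's English description precedes it below -/
import Mathlib

section
/- For every n ≥ 1, LCI_n equals the maximum, over all pairs (ℓ^X, ℓ^Y) ∈ ℕ^m × ℕ^m with ℓ^X_1+…+ℓ^X_m = n and ℓ^Y_1+…+ℓ^Y_m = n, of Σ_{i=1}^m min( #{k : ℓ^X_1+…+ℓ^X_{i−1} < k ≤ ℓ^X_1+…+ℓ^X_i and X_k = i}, #{k : ℓ^Y_1+…+ℓ^Y_{i−1} < k ≤ ℓ^Y_1+…+ℓ^Y_i and Y_k = i} ). -/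
open MeasureTheory ProbabilityTheory Filter Finset Topology

noncomputable section

attribute [local instance] Classical.propDecidable

/-- Length of the longest common weakly increasing subsequence of `X_0,…,X_{n-1}` and
`Y_0,…,Y_{n-1}`. -/
def LCI (m n : ℕ) (X Y : ℕ → Fin m) : ℕ :=
  sSup {r : ℕ | ∃ i j : Fin r → ℕ, StrictMono i ∧ StrictMono j ∧
    (∀ s, i s < n) ∧ (∀ s, j s < n) ∧
    (∀ s, X (i s) = Y (j s)) ∧ Monotone (X ∘ i) ∧ Monotone (Y ∘ j)}

/-!
A common weakly increasing subsequence amounts to two sets of positions `T` and `U` on which `X`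
and `Y` are monotone and which carry every letter equally often: two sorted sequences with the
same letter counts coincide. Given compositions `lX`, `lY`, choosing in the `a`-th block of each
word `min(·,·)` positions of the letter `a` gives such a pair, because blocks come in the order of
their letters. Conversely, the letters of `X` along `T` extend to a monotone labelling `c` of all
positions, and the level sets of `c` on `[0, n)` are the blocks of a composition in which every
position of `T` lies in the block of its own letter; so the length `#T` is at most the value of
the resulting pair of compositions.
-/

theorem Monotone.eq_of_card_fiber_eq {α : Type*} [LinearOrder α] [Fintype α] [DecidableEq α]
    {r : ℕ} {u v : Fin r → α} (hu : Monotone u) (hv : Monotone v)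
    (h : ∀ a, #{s | u s = a} = #{s | v s = a}) : u = v := by
  have hle (a : α) : #{s | u s ≤ a} = #{s | v s ≤ a} := by
    have hsum (w : Fin r → α) : #{s | w s ≤ a} = ∑ b ∈ univ.filter (· ≤ a), #{s | w s = b} := by
      rw [sum_card_fiberwise_eq_card_filter univ _ w]
      simp
    simp only [hsum, h]
  funext s
  apply le_antisymm
  · rw [← Tuple.lt_card_le_iff_apply_le_of_monotone hu, hle]
    exact (Tuple.lt_card_le_iff_apply_le_of_monotone hv).2 le_rfl
  · rw [← Tuple.lt_card_le_iff_apply_le_of_monotone hv, ← hle]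
    exact (Tuple.lt_card_le_iff_apply_le_of_monotone hu).2 le_rfl

theorem card_filter_image_univ {ι β : Type*} [Fintype ι] [DecidableEq β] {i : ι → β}
    (hi : Function.Injective i) (p : β → Prop) [DecidablePred p] :
    #{x ∈ univ.image i | p x} = #{s | p (i s)} := by
  rw [filter_image, card_image_of_injective _ hi]

theorem monotoneOn_image_univ {ι β γ : Type*} [Fintype ι] [LinearOrder ι] [Preorder β]
    [Preorder γ] [DecidableEq β] {X : β → γ} {i : ι → β} (hi : StrictMono i)
    (hX : Monotone (X ∘ i)) : MonotoneOn X (univ.image i : Finset β) := by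
  simp only [coe_image, coe_univ, Set.image_univ]
  rintro _ ⟨s, rfl⟩ _ ⟨u, rfl⟩ hsu
  exact hX (hi.le_iff_le.mp hsu)

theorem monotone_comp_orderEmbOfFin {β γ : Type*} [LinearOrder β] [Preorder γ] {X : β → γ}
    {T : Finset β} {r : ℕ} (hT : #T = r) (hX : MonotoneOn X T) :
    Monotone (X ∘ T.orderEmbOfFin hT) := fun s u hsu =>
  hX (T.orderEmbOfFin_mem hT s) (T.orderEmbOfFin_mem hT u) ((T.orderEmbOfFin hT).monotone hsu)

section CommonSubsequences

variable {α : Type*} [LinearOrder α]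

def commonIncSubseqLengths (n : ℕ) (X Y : ℕ → α) : Set ℕ :=
  {r : ℕ | ∃ i j : Fin r → ℕ, StrictMono i ∧ StrictMono j ∧
    (∀ s, i s < n) ∧ (∀ s, j s < n) ∧
    (∀ s, X (i s) = Y (j s)) ∧ Monotone (X ∘ i) ∧ Monotone (Y ∘ j)}

theorem lci_eq_sSup (m n : ℕ) (X Y : ℕ → Fin m) :
    LCI m n X Y = sSup (commonIncSubseqLengths n X Y) := rfl

-- At `α = Fin m` this instance becomes the one of `Fin m`, which the statement's filters use,
-- instead of the classical one that is in force here.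
variable [Fintype α] [DecidableEq α] {n : ℕ} {X Y : ℕ → α}

theorem mem_commonIncSubseqLengths_iff {r : ℕ} :
    r ∈ commonIncSubseqLengths n X Y ↔ ∃ T U : Finset ℕ, T ⊆ range n ∧ U ⊆ range n ∧
      MonotoneOn X T ∧ MonotoneOn Y U ∧
      (∀ a, #{x ∈ T | X x = a} = #{y ∈ U | Y y = a}) ∧ #T = r := by
  constructor
  · rintro ⟨i, j, hi, hj, hin, hjn, hij, hXi, hYj⟩
    refine ⟨univ.image i, univ.image j, ?_, ?_, monotoneOn_image_univ hi hXi,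
      monotoneOn_image_univ hj hYj, fun a => ?_, ?_⟩
    · simpa [subset_iff] using hin
    · simpa [subset_iff] using hjn
    · simp only [card_filter_image_univ hi.injective, card_filter_image_univ hj.injective, hij]
    · rw [card_image_of_injective _ hi.injective, card_fin]
  · rintro ⟨T, U, hTn, hUn, hX, hY, hXY, rfl⟩
    have hU : #U = #T := by
      rw [card_eq_sum_card_fiberwise (f := X) (s := T) (t := univ) fun _ _ => mem_univ _,
        card_eq_sum_card_fiberwise (f := Y) (s := U) (t := univ) fun _ _ => mem_univ _]
      exact sum_congr rfl fun a _ => (hXY a).symm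
    have hfiber (V : Finset ℕ) (Z : ℕ → α) (hV : #V = #T) (a : α) :
        #{s | Z (V.orderEmbOfFin hV s) = a} = #{x ∈ V | Z x = a} := by
      simpa using (card_filter_image_univ (V.orderEmbOfFin hV).injective (Z · = a)).symm
    refine ⟨T.orderEmbOfFin rfl, U.orderEmbOfFin hU, (T.orderEmbOfFin rfl).strictMono,
      (U.orderEmbOfFin hU).strictMono, fun s => mem_range.1 (hTn (T.orderEmbOfFin_mem _ s)),
      fun s => mem_range.1 (hUn (U.orderEmbOfFin_mem _ s)), congrFun ?_,
      monotone_comp_orderEmbOfFin _ hX, monotone_comp_orderEmbOfFin _ hY⟩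
    refine (monotone_comp_orderEmbOfFin _ hX).eq_of_card_fiber_eq
      (monotone_comp_orderEmbOfFin _ hY) fun a => ?_
    simp only [Function.comp_apply, hfiber T X rfl, hfiber U Y hU, hXY]

theorem le_of_mem_commonIncSubseqLengths {r : ℕ} (hr : r ∈ commonIncSubseqLengths n X Y) :
    r ≤ n := by
  obtain ⟨T, -, hT, -, -, -, -, rfl⟩ := mem_commonIncSubseqLengths_iff.1 hr
  simpa using card_le_card hT

theorem zero_mem_commonIncSubseqLengths : 0 ∈ commonIncSubseqLengths n X Y :=
  mem_commonIncSubseqLengths_iff.2 ⟨∅, ∅, by simp [Set.subsingleton_empty.monotoneOn]⟩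

end CommonSubsequences

section Blocks

variable {m : ℕ}

def blockStart (l : Fin m → ℕ) (a : Fin m) : ℕ := ∑ j ∈ univ.filter (· < a), l j

def block (l : Fin m → ℕ) (a : Fin m) : Finset ℕ := Ico (blockStart l a) (blockStart l a + l a)

def blockCount (X : ℕ → Fin m) (l : Fin m → ℕ) (a : Fin m) : ℕ := #{k ∈ block l a | X k = a}

theorem blockStart_add_le_sum (l : Fin m → ℕ) {a : Fin m} {s : Finset (Fin m)}
    (hs : ∀ j ≤ a, j ∈ s) : blockStart l a + l a ≤ ∑ j ∈ s, l j := by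
  rw [blockStart, add_comm, ← sum_insert (by simp)]
  refine sum_le_sum_of_subset fun j hj => ?_
  rcases mem_insert.1 hj with rfl | hj
  · exact hs j le_rfl
  · exact hs j (mem_filter.1 hj).2.le

theorem lt_of_mem_block {l : Fin m → ℕ} {a b : Fin m} {x y : ℕ} (hab : a < b)
    (hx : x ∈ block l a) (hy : y ∈ block l b) : x < y := by
  have := blockStart_add_le_sum l (s := univ.filter (· < b)) fun j hj => by
    simpa using hj.trans_lt hab
  rw [block, mem_Ico] at hx hy
  rw [← blockStart] at this
  omega

theorem lt_sum_of_mem_block {l : Fin m → ℕ} {a : Fin m} {x : ℕ} (hx : x ∈ block l a) :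
    x < ∑ j, l j := by
  have := blockStart_add_le_sum l (a := a) (s := univ) fun j _ => mem_univ j
  rw [block, mem_Ico] at hx
  omega

theorem blockStart_card_fiber (s : Finset ℕ) (c : ℕ → Fin m) (a : Fin m) :
    blockStart (fun b => #{k ∈ s | c k = b}) a = #{k ∈ s | c k < a} := by
  rw [blockStart, sum_card_fiberwise_eq_card_filter s _ c]
  simp

theorem mem_block_card_fiber_of_monotone {n : ℕ} {c : ℕ → Fin m} (hc : Monotone c) {x : ℕ}
    (hx : x < n) : x ∈ block (fun b => #{k ∈ range n | c k = b}) (c x) := by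
  rw [block, mem_Ico, blockStart_card_fiber]
  constructor
  · calc #{k ∈ range n | c k < c x} ≤ #(range x) :=
          card_le_card fun k hk => mem_range.2 <| lt_of_not_ge fun hxk =>
            (mem_filter.1 hk).2.not_ge (hc hxk)
      _ = x := card_range x
  · calc x < #(range (x + 1)) := by simp
      _ ≤ #({k ∈ range n | c k < c x} ∪ {k ∈ range n | c k = c x}) := by
          refine card_le_card fun k hk => ?_
          have hkx : k ≤ x := Nat.lt_succ_iff.1 (mem_range.1 hk)
          simp only [mem_union, mem_filter, mem_range]
          rcases (hc hkx).lt_or_eq with h | h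
          · exact .inl ⟨by omega, h⟩
          · exact .inr ⟨by omega, h⟩
      _ ≤ _ := card_union_le _ _

theorem exists_blocks_of_monotoneOn {n : ℕ} {X : ℕ → Fin m} {T : Finset ℕ}
    (hTn : T ⊆ range n) (hX : MonotoneOn X T) :
    ∃ l : Fin m → ℕ, ∑ a, l a = n ∧ ∀ x ∈ T, x ∈ block l (X x) := by
  have : NeZero m := NeZero.of_pos (X 0).pos
  obtain ⟨c, hc, hcX⟩ := hX.exists_monotone_extension (OrderBot.bddBelow _) (OrderTop.bddAbove _)
  refine ⟨fun b => #{k ∈ range n | c k = b}, ?_, fun x hx => ?_⟩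
  · rw [sum_card_fiberwise_eq_card_filter (range n) univ c]
    simp
  · rw [hcX hx]
    exact mem_block_card_fiber_of_monotone hc (mem_range.1 (hTn hx))

theorem card_filter_le_blockCount {X : ℕ → Fin m} {l : Fin m → ℕ} {T : Finset ℕ}
    (hT : ∀ x ∈ T, x ∈ block l (X x)) (a : Fin m) : #{x ∈ T | X x = a} ≤ blockCount X l a :=
  card_le_card fun x hx => by
    obtain ⟨hxT, rfl⟩ := mem_filter.1 hx
    exact mem_filter.2 ⟨hT x hxT, rfl⟩

theorem exists_monotoneOn_of_le_blockCount {X : ℕ → Fin m} {l t : Fin m → ℕ}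
    (ht : ∀ a, t a ≤ blockCount X l a) :
    ∃ T : Finset ℕ, T ⊆ range (∑ a, l a) ∧ MonotoneOn X T ∧ ∀ a, #{x ∈ T | X x = a} = t a := by
  choose S hS hSt using fun a => exists_subset_card_eq (ht a)
  have hmem (a : Fin m) (x : ℕ) (hx : x ∈ S a) : x ∈ block l a ∧ X x = a := mem_filter.1 (hS a hx)
  refine ⟨univ.biUnion S, fun x hx => ?_, fun x hx y hy hxy => ?_, fun a => ?_⟩
  · obtain ⟨a, -, hxa⟩ := mem_biUnion.1 hx
    exact mem_range.2 (lt_sum_of_mem_block (hmem a x hxa).1)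
  · obtain ⟨a, -, hxa⟩ := mem_biUnion.1 (mem_coe.1 hx)
    obtain ⟨b, -, hyb⟩ := mem_biUnion.1 (mem_coe.1 hy)
    rw [(hmem a x hxa).2, (hmem b y hyb).2]
    by_contra! hba
    exact hxy.not_gt (lt_of_mem_block hba (hmem b y hyb).1 (hmem a x hxa).1)
  · rw [← hSt a]
    congr 1
    ext x
    simp only [mem_filter, mem_biUnion, mem_univ, true_and]
    constructor
    · rintro ⟨⟨b, hxb⟩, rfl⟩
      rwa [(hmem b x hxb).2]
    · exact fun hx => ⟨⟨a, hx⟩, (hmem a x hx).2⟩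

variable {n : ℕ} {X Y : ℕ → Fin m}

theorem sum_min_blockCount_mem {lX lY : Fin m → ℕ} (hlX : ∑ a, lX a = n)
    (hlY : ∑ a, lY a = n) :
    ∑ a, min (blockCount X lX a) (blockCount Y lY a) ∈ commonIncSubseqLengths n X Y := by
  obtain ⟨T, hTn, hX, hTc⟩ := exists_monotoneOn_of_le_blockCount fun a =>
    min_le_left (blockCount X lX a) (blockCount Y lY a)
  obtain ⟨U, hUn, hY, hUc⟩ := exists_monotoneOn_of_le_blockCount fun a =>
    min_le_right (blockCount X lX a) (blockCount Y lY a)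
  refine mem_commonIncSubseqLengths_iff.2 ⟨T, U, hlX ▸ hTn, hlY ▸ hUn, hX, hY,
    fun a => by rw [hTc, hUc], ?_⟩
  rw [card_eq_sum_card_fiberwise (f := X) (t := univ) fun _ _ => mem_univ _]
  exact sum_congr rfl fun a _ => hTc a

theorem exists_le_sum_min_blockCount {r : ℕ} (hr : r ∈ commonIncSubseqLengths n X Y) :
    ∃ lX lY : Fin m → ℕ, ∑ a, lX a = n ∧ ∑ a, lY a = n ∧
      r ≤ ∑ a, min (blockCount X lX a) (blockCount Y lY a) := by
  obtain ⟨T, U, hTn, hUn, hX, hY, hXY, rfl⟩ := mem_commonIncSubseqLengths_iff.1 hr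
  obtain ⟨lX, hlX, hTX⟩ := exists_blocks_of_monotoneOn hTn hX
  obtain ⟨lY, hlY, hUY⟩ := exists_blocks_of_monotoneOn hUn hY
  refine ⟨lX, lY, hlX, hlY, ?_⟩
  rw [card_eq_sum_card_fiberwise (f := X) (t := univ) fun _ _ => mem_univ _]
  gcongr with a
  exact le_min (card_filter_le_blockCount hTX a) (hXY a ▸ card_filter_le_blockCount hUY a)

end Blocks

theorem lci_eq_max_over_blocks_general (m n : ℕ)
    (X Y : ℕ → Fin m) :
    IsGreatest
      {v : ℕ | ∃ lX lY : Fin m → ℕ, (∑ i, lX i = n) ∧ (∑ i, lY i = n) ∧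
        v = ∑ i : Fin m,
          min
            (((Finset.Ico (∑ j ∈ Finset.univ.filter (· < i), lX j)
                ((∑ j ∈ Finset.univ.filter (· < i), lX j) + lX i)).filter
              (fun k => X k = i)).card)
            (((Finset.Ico (∑ j ∈ Finset.univ.filter (· < i), lY j)
                ((∑ j ∈ Finset.univ.filter (· < i), lY j) + lY i)).filter
              (fun k => Y k = i)).card)}
      (LCI m n X Y) := by
  rw [lci_eq_sSup]
  have hbdd : BddAbove (commonIncSubseqLengths n X Y) :=
    ⟨n, fun _ => le_of_mem_commonIncSubseqLengths⟩
  have hmem := Nat.sSup_mem ⟨0, zero_mem_commonIncSubseqLengths⟩ hbdd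
  refine ⟨?_, ?_⟩
  · obtain ⟨lX, lY, hlX, hlY, hle⟩ := exists_le_sum_min_blockCount hmem
    exact ⟨lX, lY, hlX, hlY, hle.antisymm (le_csSup hbdd (sum_min_blockCount_mem hlX hlY))⟩
  · rintro v ⟨lX, lY, hlX, hlY, rfl⟩
    exact le_csSup hbdd (sum_min_blockCount_mem hlX hlY)

/-- The representation of `LCI_n` as the maximum, over all pairs of compositions
`(ℓ^X, ℓ^Y)` of `n` into `m` (possibly empty) blocks, of the sum over letters `i` of the
minimum of the number of occurrences of `i` in the `i`-th block of each word. -/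
theorem lci_eq_max_over_blocks (m n : ℕ) (hm : 2 ≤ m) (hn : 1 ≤ n)
    (X Y : ℕ → Fin m) :
    IsGreatest
      {v : ℕ | ∃ lX lY : Fin m → ℕ, (∑ i, lX i = n) ∧ (∑ i, lY i = n) ∧
        v = ∑ i : Fin m,
          min
            (((Finset.Ico (∑ j ∈ Finset.univ.filter (· < i), lX j)
                ((∑ j ∈ Finset.univ.filter (· < i), lX j) + lX i)).filter
              (fun k => X k = i)).card)
            (((Finset.Ico (∑ j ∈ Finset.univ.filter (· < i), lY j)
                ((∑ j ∈ Finset.univ.filter (· < i), lY j) + lY i)).filter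
              (fun k => Y k = i)).card)}
      (LCI m n X Y) :=
  lci_eq_max_over_blocks_general m n X Y

end
end

section
/- As n → ∞, LCI_n/n converges almost surely to e_max := max_{λ∈Λ²} Σ_{i=1}^m min(p^X_i λ^X_i, p^Y_i λ^Y_i), and moreover E[LCI_n]/n converges to e_max. -/
open MeasureTheory ProbabilityTheory Filter Finset Topology

noncomputable section

attribute [local instance] Classical.propDecidable

/-- `X` and `Y` are independent sequences of i.i.d. random variables with values in `Fin m`
and respective probability mass functions `pX` and `pY`; all the variables (from both
sequences) form an independent family. -/
def IIDPair {Ω : Type*} [MeasurableSpace Ω] (P : Measure Ω) {m : ℕ}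
    (X Y : ℕ → Ω → Fin m) (pX pY : Fin m → ℝ) : Prop :=
  (∀ k, Measurable (X k)) ∧ (∀ k, Measurable (Y k)) ∧
  (∀ k i, P (X k ⁻¹' {i}) = ENNReal.ofReal (pX i)) ∧
  (∀ k i, P (Y k ⁻¹' {i}) = ENNReal.ofReal (pY i)) ∧
  iIndepFun (Sum.elim X Y) P

/-- `B` is a Brownian motion on `[0,1]` with covariance matrix `C`: continuous paths,
`B 0 = 0`, independent increments, and for `0 ≤ s ≤ t ≤ 1` the increment `B t - B s` is a
centered Gaussian vector with covariance `(t - s) • C` (characterized through its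
one-dimensional linear projections). -/
def IsBM {Ω : Type*} [MeasurableSpace Ω] (P : Measure Ω) {ι : Type*} [Fintype ι]
    (B : ℝ → Ω → ι → ℝ) (C : ι → ι → ℝ) : Prop :=
  (∀ t, Measurable (B t)) ∧
  (∀ ω, ContinuousOn (fun t => B t ω) (Set.Icc 0 1)) ∧
  (∀ ω, B 0 ω = 0) ∧
  (∀ n : ℕ, ∀ t : Fin (n + 1) → ℝ, Monotone t → (∀ j, t j ∈ Set.Icc (0 : ℝ) 1) →
    iIndepFun
      (fun j : Fin n => fun ω => B (t j.succ) ω - B (t j.castSucc) ω) P) ∧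
  (∀ s t : ℝ, 0 ≤ s → s ≤ t → t ≤ 1 → ∀ a : ι → ℝ,
    P.map (fun ω => ∑ i, a i * (B t ω i - B s ω i)) =
      gaussianReal 0 (((t - s) * ∑ i, ∑ j, a i * C i j * a j)).toNNReal)

/-- Convergence in distribution (weak convergence of the laws), characterized by convergence
of the expectations of bounded continuous functions. -/
def TendstoInDistribution {Ω Ω' : Type*} [MeasurableSpace Ω] [MeasurableSpace Ω']
    (P : Measure Ω) (Z : ℕ → Ω → ℝ) (Q : Measure Ω') (W : Ω' → ℝ) : Prop :=
  ∀ f : BoundedContinuousFunction ℝ ℝ,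
    Tendsto (fun n => ∫ ω, f (Z n ω) ∂P) atTop (𝓝 (∫ ω, f (W ω) ∂Q))

/-- The simplex `Λ` of probability vectors on `{1,…,m}`. -/
def Lam (m : ℕ) : Set (Fin m → ℝ) := {l | (∀ i, 0 ≤ l i) ∧ ∑ i, l i = 1}

/-- `f(λ^X, λ^Y) = Σ_i min (p^X_i λ^X_i) (p^Y_i λ^Y_i)`. -/
def fobj {m : ℕ} (pX pY : Fin m → ℝ) (l : (Fin m → ℝ) × (Fin m → ℝ)) : ℝ :=
  ∑ i, min (pX i * l.1 i) (pY i * l.2 i)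

/-- `e_max`, the maximum of `f` over `Λ²`. -/
def emax {m : ℕ} (pX pY : Fin m → ℝ) : ℝ :=
  sSup (fobj pX pY '' (Lam m ×ˢ Lam m))

/-- The set `U`. -/
def Uset {m : ℕ} (pX pY : Fin m → ℝ) : Set (Fin m → ℝ) :=
  {u | (∀ i, 0 ≤ u i) ∧ (∑ i, u i / pX i) ≤ 1 ∧ (∑ i, u i / pY i) ≤ 1}

/-- The set `L_U` of maximizers of `φ(u) = Σ_i u_i` over `U`. -/
def LU {m : ℕ} (pX pY : Fin m → ℝ) : Set (Fin m → ℝ) :=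
  {u ∈ Uset pX pY | ∑ i, u i = emax pX pY}

/-- The set `I` of letters usable in a maximizer. -/
def Iset {m : ℕ} (pX pY : Fin m → ℝ) : Set (Fin m) :=
  {i | ∃ u ∈ LU pX pY, 0 < u i}

/-- Case a): some maximizer saturates the `X` constraint but not the `Y` one. -/
def CaseA {m : ℕ} (pX pY : Fin m → ℝ) : Prop :=
  ∃ u ∈ LU pX pY, (∑ i, u i / pX i) = 1 ∧ (∑ i, u i / pY i) < 1

/-- Case b): every maximizer saturates both constraints. -/
def CaseB {m : ℕ} (pX pY : Fin m → ℝ) : Prop :=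
  ∀ u ∈ LU pX pY, (∑ i, u i / pX i) = 1 ∧ (∑ i, u i / pY i) = 1

/-- Case b1): Case b) and the vectors `(1/p^X_i)_{i∈I}` and `(1/p^Y_i)_{i∈I}` coincide. -/
def CaseB1 {m : ℕ} (pX pY : Fin m → ℝ) : Prop :=
  CaseB pX pY ∧ ∀ i ∈ Iset pX pY, (pX i)⁻¹ = (pY i)⁻¹

/-- Case b2): Case b) and the vectors `(1/p^X_i)_{i∈I}` and `(1/p^Y_i)_{i∈I}` differ. -/
def CaseB2 {m : ℕ} (pX pY : Fin m → ℝ) : Prop :=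
  CaseB pX pY ∧ ¬ (∀ i ∈ Iset pX pY, (pX i)⁻¹ = (pY i)⁻¹)

/-- The set `K_{Λ²}` of maximizers of `f` over `Λ²`. -/
def Kset {m : ℕ} (pX pY : Fin m → ℝ) : Set ((Fin m → ℝ) × (Fin m → ℝ)) :=
  {l ∈ Lam m ×ˢ Lam m | fobj pX pY l = emax pX pY}

/-- `p^X_max`. -/
def pXmax {m : ℕ} (pX : Fin m → ℝ) : ℝ := ⨆ i, pX i

/-- The set `J` (Case a)). -/
def Jset {m : ℕ} (pX pY : Fin m → ℝ) : Set (Fin m → ℝ) :=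
  {l ∈ Lam m | (∀ i ∉ Iset pX pY, l i = 0) ∧
    (∑ i ∈ Finset.univ.filter (· ∈ Iset pX pY), l i / pY i) ≤ 1 / pXmax pX}

/-- `E = {x : Σ_i x_i = 0}`. -/
def Eset (m : ℕ) : Set (Fin m → ℝ) := {x | ∑ i, x i = 0}

/-- `E' = {x ∈ E : x_i ≥ 0 for i ∉ I}`. -/
def E'set {m : ℕ} (pX pY : Fin m → ℝ) : Set (Fin m → ℝ) :=
  {x ∈ Eset m | ∀ i ∉ Iset pX pY, 0 ≤ x i}

/-- The function `𝔪` of Lemma 1.4. -/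
def mfrak {m : ℕ} (pX pY : Fin m → ℝ) (ν : (Fin m → ℝ) × (Fin m → ℝ)) : ℝ :=
  sSup ((fun x : (Fin m → ℝ) × (Fin m → ℝ) =>
      ∑ i, min (pX i * x.1 i + ν.1 i) (pY i * x.2 i + ν.2 i)) ''
    (E'set pX pY ×ˢ E'set pX pY))

/-- Partial sum `λ_1 + … + λ_i`. -/
def psumLe {m : ℕ} (l : Fin m → ℝ) (i : Fin m) : ℝ :=
  ∑ j ∈ Finset.univ.filter (· ≤ i), l j

/-- Partial sum `λ_1 + … + λ_{i-1}`. -/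
def psumLt {m : ℕ} (l : Fin m → ℝ) (i : Fin m) : ℝ :=
  ∑ j ∈ Finset.univ.filter (· < i), l j

/-- `e(i,j)`. -/
def eij {m : ℕ} (pX pY : Fin m → ℝ) (i j : Fin m) : ℝ :=
  (pX i * pY i * (pX j - pY j) + pX j * pY j * (pY i - pX i)) /
    (pY i * pX j - pX i * pY j)

/-- The set `S` of admissible pairs `(i,j)` in the representation of `e_max`. -/
def Sset {m : ℕ} (pX pY : Fin m → ℝ) : Set (Fin m × Fin m) :=
  {ij | pX ij.1 < pX ij.2 ∧ pY ij.2 < pY ij.1 ∧ pX ij.1 < pY ij.1 ∧ pY ij.2 < pX ij.2}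

/-- `e_1 = max_i min(p^X_i, p^Y_i)`. -/
def e1 {m : ℕ} (pX pY : Fin m → ℝ) : ℝ := ⨆ i, min (pX i) (pY i)

/-- `e_2 = max_{(i,j)∈S} e(i,j)` (with `sSup ∅ = 0` when `S` is empty). -/
def e2 {m : ℕ} (pX pY : Fin m → ℝ) : ℝ :=
  sSup ((fun ij : Fin m × Fin m => eij pX pY ij.1 ij.2) '' Sset pX pY)

/-!
A common weakly increasing subsequence reads the letters in increasing order, so it is described
by block boundaries `a₀ ≤ ⋯ ≤ a_m ≤ n` in `X` and `b₀ ≤ ⋯ ≤ b_m ≤ n` in `Y`: the letter `t` is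
matched inside the `t`-th blocks, `min (#t in X[a_t, a_{t+1})) (#t in Y[b_t, b_{t+1}))` times.
Hence `LCI_n` is the maximal block score. By the strong law of large numbers, the number of `t`s
in the first `k ≤ n` letters is `p_t k + o(n)` uniformly in `k`, so blocks of lengths `n λ` score
`n f(λ) + o(n)`, and the block score is never above `n e_max + o(n)`. Thus `LCI_n / n → e_max`
almost surely, and dominated convergence (`LCI_n ≤ n`) gives the expectations.
-/

section CommonSubsequence

variable {m : ℕ}

def HasCommonIncSubseq (n r : ℕ) (X Y : ℕ → Fin m) : Prop :=
  ∃ i j : Fin r → ℕ, StrictMono i ∧ StrictMono j ∧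
    (∀ s, i s < n) ∧ (∀ s, j s < n) ∧
    (∀ s, X (i s) = Y (j s)) ∧ Monotone (X ∘ i) ∧ Monotone (Y ∘ j)

variable {n r : ℕ} {X Y : ℕ → Fin m}

lemma hasCommonIncSubseq_zero : HasCommonIncSubseq n 0 X Y := by
  refine ⟨Fin.elim0, Fin.elim0, ?_⟩
  simp [StrictMono, Monotone]

lemma HasCommonIncSubseq.le (h : HasCommonIncSubseq n r X Y) : r ≤ n := by
  obtain ⟨i, -, hi, -, hin, -⟩ := h
  simpa using Fintype.card_le_of_injective (fun s => (⟨i s, hin s⟩ : Fin n))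
    fun s s' h => hi.injective (Fin.mk.inj h)

lemma HasCommonIncSubseq.congr {X' Y' : ℕ → Fin m} (h : HasCommonIncSubseq n r X Y)
    (hX : ∀ k < n, X k = X' k) (hY : ∀ k < n, Y k = Y' k) : HasCommonIncSubseq n r X' Y' := by
  obtain ⟨i, j, hi, hj, hin, hjn, hij, hXi, hYj⟩ := h
  have hXi' : X' ∘ i = X ∘ i := funext fun s => (hX _ (hin s)).symm
  have hYj' : Y' ∘ j = Y ∘ j := funext fun s => (hY _ (hjn s)).symm
  refine ⟨i, j, hi, hj, hin, hjn, fun s => ?_, hXi' ▸ hXi, hYj' ▸ hYj⟩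
  rw [← hX _ (hin s), ← hY _ (hjn s), hij]

lemma bddAbove_hasCommonIncSubseq : BddAbove {r | HasCommonIncSubseq n r X Y} :=
  ⟨n, fun _ h => HasCommonIncSubseq.le h⟩

lemma LCI_le : LCI m n X Y ≤ n :=
  csSup_le ⟨0, hasCommonIncSubseq_zero⟩ fun _ h => HasCommonIncSubseq.le h

lemma le_LCI (h : HasCommonIncSubseq n r X Y) : r ≤ LCI m n X Y :=
  le_csSup bddAbove_hasCommonIncSubseq h

lemma hasCommonIncSubseq_LCI : HasCommonIncSubseq n (LCI m n X Y) X Y :=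
  Nat.sSup_mem ⟨0, hasCommonIncSubseq_zero⟩ bddAbove_hasCommonIncSubseq

lemma LCI_congr {X' Y' : ℕ → Fin m} (hX : ∀ k < n, X k = X' k) (hY : ∀ k < n, Y k = Y' k) :
    LCI m n X Y = LCI m n X' Y' := by
  refine congrArg sSup (Set.ext fun r => ⟨fun h => HasCommonIncSubseq.congr h hX hY,
    fun h => HasCommonIncSubseq.congr h (fun k hk => (hX k hk).symm) fun k hk => (hY k hk).symm⟩)

lemma card_filter_orderEmbOfFin {S : Finset ℕ} (h : #S = r) (p : ℕ → Prop) [DecidablePred p] :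
    #{s | p (S.orderEmbOfFin h s)} = #{k ∈ S | p k} := by
  conv_rhs => rw [← S.map_orderEmbOfFin_univ h, filter_map, card_map]
  rfl

lemma hasCommonIncSubseq_of_finsets {S T : Finset ℕ} (hS : ∀ k ∈ S, k < n)
    (hT : ∀ k ∈ T, k < n) (hXS : MonotoneOn X S) (hYT : MonotoneOn Y T)
    (hcount : ∀ u, #{k ∈ S | X k = u} = #{k ∈ T | Y k = u}) :
    HasCommonIncSubseq n #S X Y := by
  have hST : #T = #S := by
    rw [card_eq_sum_card_fiberwise (s := S) (f := X) (t := univ) (fun _ _ => mem_univ _),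
      card_eq_sum_card_fiberwise (s := T) (f := Y) (t := univ) (fun _ _ => mem_univ _)]
    exact sum_congr rfl fun u _ => (hcount u).symm
  set i := S.orderEmbOfFin rfl
  set j := T.orderEmbOfFin hST
  have hXi : Monotone (X ∘ i) := fun s s' h =>
    hXS (S.orderEmbOfFin_mem rfl s) (S.orderEmbOfFin_mem rfl s') (i.monotone h)
  have hYj : Monotone (Y ∘ j) := fun s s' h =>
    hYT (T.orderEmbOfFin_mem hST s) (T.orderEmbOfFin_mem hST s') (j.monotone h)
  -- A monotone letter sequence is determined by how many of its terms are `≤ u`, for each `u`.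
  have hle : ∀ s u, X (i s) ≤ u ↔ Y (j s) ≤ u := fun s u => by
    change (X ∘ i) s ≤ u ↔ (Y ∘ j) s ≤ u
    rw [← Tuple.lt_card_le_iff_apply_le_of_monotone hXi,
      ← Tuple.lt_card_le_iff_apply_le_of_monotone hYj]
    have hSu := card_filter_orderEmbOfFin (rfl : #S = #S) (X · ≤ u)
    have hTu := card_filter_orderEmbOfFin hST (Y · ≤ u)
    simp only [Function.comp_apply] at hSu hTu ⊢
    have hfib := fun (R : Finset ℕ) (Z : ℕ → Fin m) =>
      sum_card_fiberwise_eq_card_filter R {t | t ≤ u} Z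
    simp only [mem_filter_univ] at hfib
    rw [hSu, hTu, ← hfib, ← hfib]
    simp only [hcount]
  refine ⟨i, j, i.strictMono, j.strictMono, fun s => hS _ (S.orderEmbOfFin_mem rfl s),
    fun s => hT _ (T.orderEmbOfFin_mem hST s), fun s => ?_, hXi, hYj⟩
  exact le_antisymm ((hle s _).2 le_rfl) ((hle s _).1 le_rfl)

end CommonSubsequence

section BlockScore

variable {m n r : ℕ} {X Y : ℕ → Fin m}

def letterCount (Z : ℕ → Fin m) (t : Fin m) (p q : ℕ) : ℕ := #{k ∈ Ico p q | Z k = t}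

def blockScore (X Y : ℕ → Fin m) (a b : Fin (m + 1) → ℕ) : ℕ :=
  ∑ t, min (letterCount X t (a t.castSucc) (a t.succ)) (letterCount Y t (b t.castSucc) (b t.succ))

section LetterBlocks

variable {Z : ℕ → Fin m} {a : Fin (m + 1) → ℕ} {A : Fin m → Finset ℕ}

lemma filter_biUnion_letterBlocks (hA : ∀ t, A t ⊆ {k ∈ Ico (a t.castSucc) (a t.succ) | Z k = t})
    (u : Fin m) : {k ∈ univ.biUnion A | Z k = u} = A u := by
  ext k
  simp only [mem_filter, mem_biUnion, mem_univ, true_and]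
  refine ⟨fun ⟨⟨t, hk⟩, hku⟩ => ?_, fun hk => ⟨⟨u, hk⟩, (mem_filter.1 (hA u hk)).2⟩⟩
  rwa [← hku, (mem_filter.1 (hA t hk)).2]

lemma lt_of_mem_biUnion_letterBlocks (ha : Monotone a)
    (hA : ∀ t, A t ⊆ {k ∈ Ico (a t.castSucc) (a t.succ) | Z k = t}) {k : ℕ}
    (hk : k ∈ univ.biUnion A) : k < a (Fin.last m) := by
  obtain ⟨t, -, hkt⟩ := mem_biUnion.1 hk
  exact (mem_Ico.1 (mem_filter.1 (hA t hkt)).1).2.trans_le (ha (Fin.le_last _))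

lemma monotoneOn_biUnion_letterBlocks (ha : Monotone a)
    (hA : ∀ t, A t ⊆ {k ∈ Ico (a t.castSucc) (a t.succ) | Z k = t}) :
    MonotoneOn Z (univ.biUnion A) := by
  intro k hk k' hk' hkk'
  obtain ⟨t, -, hkt⟩ := mem_biUnion.1 hk
  obtain ⟨t', -, hkt'⟩ := mem_biUnion.1 hk'
  have hkt := hA t hkt
  have hkt' := hA t' hkt'
  simp only [mem_filter, mem_Ico] at hkt hkt'
  obtain ⟨⟨hk1, -⟩, rfl⟩ := hkt
  obtain ⟨⟨-, hk2⟩, rfl⟩ := hkt'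
  by_contra! h
  have := ha (Fin.succ_le_castSucc_iff.2 h)
  omega

lemma exists_blockBoundaries {i : Fin r → ℕ} (hi : StrictMono i) (hin : ∀ s, i s < n)
    (hZi : Monotone (Z ∘ i)) :
    ∃ a : Fin (m + 1) → ℕ, Monotone a ∧ a (Fin.last m) ≤ n ∧
      ∀ s, i s ∈ Ico (a (Z (i s)).castSucc) (a (Z (i s)).succ) := by
  refine ⟨fun T => univ.sup fun s => if (Z (i s)).castSucc < T then i s + 1 else 0,
    fun T T' h => sup_mono_fun fun s _ => ?_, Finset.sup_le fun s _ => ?_,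
    fun s => mem_Ico.2 ⟨?_, ?_⟩⟩
  · split_ifs <;> omega
  · split_ifs
    exacts [hin s, Nat.zero_le n]
  · refine Finset.sup_le fun s' _ => ?_
    split_ifs with h
    exacts [hi (hZi.reflect_lt (Fin.castSucc_lt_castSucc_iff.1 h)), Nat.zero_le _]
  · refine Nat.lt_of_succ_le (le_trans ?_ (le_sup (mem_univ s)))
    simp

lemma card_fiber_le_letterCount {i : Fin r → ℕ} (hi : StrictMono i)
    (hia : ∀ s, i s ∈ Ico (a (Z (i s)).castSucc) (a (Z (i s)).succ)) (u : Fin m) :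
    #{s | Z (i s) = u} ≤ letterCount Z u (a u.castSucc) (a u.succ) := by
  refine card_le_card_of_injOn i (fun s hs => ?_) hi.injective.injOn
  simp only [coe_filter, mem_univ, true_and, Set.mem_ofPred_eq] at hs
  simp only [coe_filter, Set.mem_ofPred_eq, hs ▸ hia s, hs, and_self]

end LetterBlocks

lemma blockScore_le_LCI {a b : Fin (m + 1) → ℕ} (ha : Monotone a) (hb : Monotone b)
    (han : a (Fin.last m) ≤ n) (hbn : b (Fin.last m) ≤ n) : blockScore X Y a b ≤ LCI m n X Y := by
  choose A hAsub hAcard using fun t => exists_subset_card_eq (min_le_left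
    (letterCount X t (a t.castSucc) (a t.succ)) (letterCount Y t (b t.castSucc) (b t.succ)))
  choose B hBsub hBcard using fun t => exists_subset_card_eq (min_le_right
    (letterCount X t (a t.castSucc) (a t.succ)) (letterCount Y t (b t.castSucc) (b t.succ)))
  have hcard : #(univ.biUnion A) = blockScore X Y a b := by
    rw [card_eq_sum_card_fiberwise (f := X) (t := univ) fun _ _ => mem_univ _]
    simp only [filter_biUnion_letterBlocks hAsub, hAcard, blockScore]
  rw [← hcard]
  refine le_LCI (hasCommonIncSubseq_of_finsets
    (fun k hk => (lt_of_mem_biUnion_letterBlocks ha hAsub hk).trans_le han)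
    (fun k hk => (lt_of_mem_biUnion_letterBlocks hb hBsub hk).trans_le hbn)
    (monotoneOn_biUnion_letterBlocks ha hAsub) (monotoneOn_biUnion_letterBlocks hb hBsub)
    fun u => ?_)
  rw [filter_biUnion_letterBlocks hAsub, filter_biUnion_letterBlocks hBsub, hAcard, hBcard]

lemma exists_LCI_le_blockScore (n : ℕ) (X Y : ℕ → Fin m) :
    ∃ a b : Fin (m + 1) → ℕ, Monotone a ∧ Monotone b ∧ a (Fin.last m) ≤ n ∧
      b (Fin.last m) ≤ n ∧ LCI m n X Y ≤ blockScore X Y a b := by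
  obtain ⟨i, j, hi, hj, hin, hjn, hij, hXi, hYj⟩ :=
    hasCommonIncSubseq_LCI (n := n) (X := X) (Y := Y)
  obtain ⟨a, ha, han, hia⟩ := exists_blockBoundaries hi hin hXi
  obtain ⟨b, hb, hbn, hjb⟩ := exists_blockBoundaries hj hjn hYj
  refine ⟨a, b, ha, hb, han, hbn, ?_⟩
  calc LCI m n X Y = ∑ u, #{s | X (i s) = u} := by
        simpa using card_eq_sum_card_fiberwise (s := univ) (f := X ∘ i) (t := univ)
          fun _ _ => mem_univ _
    _ ≤ blockScore X Y a b := sum_le_sum fun u _ => le_min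
        (card_fiber_le_letterCount hi hia u)
        (by simpa only [hij] using card_fiber_le_letterCount hj hjb u)

end BlockScore

section Optimization

variable {m : ℕ} {pX pY : Fin m → ℝ}

lemma fobj_mono (hpX : ∀ i, 0 ≤ pX i) (hpY : ∀ i, 0 ≤ pY i) {x y x' y' : Fin m → ℝ}
    (hx : x ≤ x') (hy : y ≤ y') : fobj pX pY (x, y) ≤ fobj pX pY (x', y') :=
  sum_le_sum fun i _ => min_le_min (mul_le_mul_of_nonneg_left (hx i) (hpX i))
    (mul_le_mul_of_nonneg_left (hy i) (hpY i))

lemma fobj_smul {c : ℝ} (hc : 0 ≤ c) (x y : Fin m → ℝ) :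
    fobj pX pY (c • x, c • y) = c * fobj pX pY (x, y) := by
  simp only [fobj, mul_sum, Pi.smul_apply, smul_eq_mul, mul_min_of_nonneg _ _ hc, mul_left_comm c]

lemma bddAbove_fobj_image (hpX : ∀ i, 0 ≤ pX i) : BddAbove (fobj pX pY '' (Lam m ×ˢ Lam m)) := by
  refine ⟨∑ i, pX i, ?_⟩
  rintro _ ⟨l, ⟨⟨hl0, hl1⟩, -⟩, rfl⟩
  refine sum_le_sum fun i _ => (min_le_left _ _).trans (mul_le_of_le_one_right (hpX i) ?_)
  exact hl1 ▸ single_le_sum (fun j _ => hl0 j) (mem_univ i)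

lemma fobj_le_emax (hpX : ∀ i, 0 ≤ pX i) {l : (Fin m → ℝ) × (Fin m → ℝ)}
    (hl : l ∈ Lam m ×ˢ Lam m) : fobj pX pY l ≤ emax pX pY :=
  le_csSup (bddAbove_fobj_image hpX) ⟨l, hl, rfl⟩

lemma exists_mem_Lam_ge (hm : 0 < m) {x : Fin m → ℝ} (hx0 : ∀ i, 0 ≤ x i) (hx1 : ∑ i, x i ≤ 1) :
    ∃ l ∈ Lam m, x ≤ l := by
  have hsingle : 0 ≤ Pi.single (M := fun _ => ℝ) (⟨0, hm⟩ : Fin m) (1 - ∑ i, x i) :=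
    Pi.single_nonneg.2 (sub_nonneg.2 hx1)
  refine ⟨x + Pi.single ⟨0, hm⟩ (1 - ∑ i, x i), ⟨fun i => add_nonneg (hx0 i) (hsingle i), ?_⟩,
    fun i => le_add_of_nonneg_right (hsingle i)⟩
  simp [sum_add_distrib]

lemma Lam_nonempty (hm : 0 < m) : (Lam m).Nonempty := by
  obtain ⟨l, hl, -⟩ := exists_mem_Lam_ge hm (x := 0) (fun _ => le_rfl) (by simp)
  exact ⟨l, hl⟩

lemma fobj_le_mul_emax (hm : 0 < m) (hpX : ∀ i, 0 ≤ pX i) (hpY : ∀ i, 0 ≤ pY i)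
    {x y : Fin m → ℝ} (hx0 : ∀ i, 0 ≤ x i) (hy0 : ∀ i, 0 ≤ y i) {s : ℝ} (hs : 0 < s)
    (hxs : ∑ i, x i ≤ s) (hys : ∑ i, y i ≤ s) : fobj pX pY (x, y) ≤ s * emax pX pY := by
  have hrescale : ∀ z : Fin m → ℝ, (∀ i, 0 ≤ z i) → ∑ i, z i ≤ s → ∃ l ∈ Lam m, s⁻¹ • z ≤ l :=
    fun z hz0 hzs => exists_mem_Lam_ge hm (fun i => mul_nonneg (inv_nonneg.2 hs.le) (hz0 i))
      (by simpa [← mul_sum] using inv_mul_le_one_of_le₀ hzs hs.le)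
  obtain ⟨l, hl, hxl⟩ := hrescale x hx0 hxs
  obtain ⟨l', hl', hyl'⟩ := hrescale y hy0 hys
  calc fobj pX pY (x, y) = s * fobj pX pY (s⁻¹ • x, s⁻¹ • y) := by
        rw [← fobj_smul hs.le, smul_inv_smul₀ hs.ne', smul_inv_smul₀ hs.ne']
    _ ≤ s * fobj pX pY (l, l') := mul_le_mul_of_nonneg_left (fobj_mono hpX hpY hxl hyl') hs.le
    _ ≤ s * emax pX pY := mul_le_mul_of_nonneg_left (fobj_le_emax hpX ⟨hl, hl'⟩) hs.le

lemma mul_fobj_sub_le_fobj (hpX : ∀ i, 0 ≤ pX i) (hpY : ∀ i, 0 ≤ pY i) {c : ℝ} (hc : 0 ≤ c)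
    {x y x' y' : Fin m → ℝ} (hx : ∀ i, c * x i - 1 ≤ x' i) (hy : ∀ i, c * y i - 1 ≤ y' i) :
    c * fobj pX pY (x, y) - ∑ i, (pX i + pY i) ≤ fobj pX pY (x', y') := by
  rw [fobj, fobj, mul_sum, ← sum_sub_distrib]
  refine sum_le_sum fun i _ => ?_
  have h1 := mul_le_mul_of_nonneg_left (hx i) (hpX i)
  have h2 := mul_le_mul_of_nonneg_left (hy i) (hpY i)
  have h3 := min_le_left (c * (pX i * x i)) (c * (pY i * y i))
  have h4 := min_le_right (c * (pX i * x i)) (c * (pY i * y i))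
  rw [mul_min_of_nonneg _ _ hc]
  exact le_min (by linarith [hpY i]) (by linarith [hpX i])

end Optimization

section Boundaries

variable {m : ℕ}

def blockLengths (a : Fin (m + 1) → ℕ) (t : Fin m) : ℝ := (a t.succ : ℝ) - a t.castSucc

lemma blockLengths_nonneg {a : Fin (m + 1) → ℕ} (ha : Monotone a) (t : Fin m) :
    0 ≤ blockLengths a t :=
  sub_nonneg.2 (Nat.cast_le.2 (ha Fin.castSucc_lt_succ.le))

lemma sum_blockLengths (a : Fin (m + 1) → ℕ) :
    ∑ t, blockLengths a t = a (Fin.last m) - a 0 := by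
  have h1 := Fin.sum_univ_succ fun T => (a T : ℝ)
  have h2 := Fin.sum_univ_castSucc fun T => (a T : ℝ)
  simp only [blockLengths, sum_sub_distrib]
  linarith

lemma sum_blockLengths_le {a : Fin (m + 1) → ℕ} {n : ℕ} (han : a (Fin.last m) ≤ n) :
    ∑ t, blockLengths a t ≤ n := by
  rw [sum_blockLengths]
  have : (a (Fin.last m) : ℝ) ≤ n := by exact_mod_cast han
  linarith [(a 0).cast_nonneg (α := ℝ)]

lemma monotone_partialSum {l : Fin m → ℝ} (hl : ∀ i, 0 ≤ l i) : Monotone (Fin.partialSum l) :=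
  Fin.monotone_iff_le_succ.2 fun t => by rw [Fin.partialSum_succ]; linarith [hl t]

def floorBoundary (l : Fin m → ℝ) (n : ℕ) (T : Fin (m + 1)) : ℕ := ⌊Fin.partialSum l T * n⌋₊

lemma monotone_floorBoundary {l : Fin m → ℝ} (hl : ∀ i, 0 ≤ l i) (n : ℕ) :
    Monotone (floorBoundary l n) := fun _ _ h =>
  Nat.floor_le_floor (mul_le_mul_of_nonneg_right (monotone_partialSum hl h) n.cast_nonneg)

lemma floorBoundary_last {l : Fin m → ℝ} (hl : ∑ i, l i = 1) (n : ℕ) :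
    floorBoundary l n (Fin.last m) = n := by
  rw [floorBoundary, Fin.partialSum, Fin.val_last, List.take_of_length_le (by simp), List.sum_ofFn,
    hl, one_mul, Nat.floor_natCast]

lemma mul_sub_one_le_blockLengths_floorBoundary {l : Fin m → ℝ} (hl : ∀ i, 0 ≤ l i) (n : ℕ)
    (t : Fin m) : n * l t - 1 ≤ blockLengths (floorBoundary l n) t := by
  have h0 : 0 ≤ Fin.partialSum l t.castSucc :=
    Fin.partialSum_zero l ▸ monotone_partialSum hl (Fin.zero_le _)
  have h1 := Nat.lt_floor_add_one (Fin.partialSum l t.succ * n)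
  have h2 := Nat.floor_le (mul_nonneg h0 n.cast_nonneg)
  simp only [blockLengths, floorBoundary]
  rw [Fin.partialSum_succ] at h1 ⊢
  linarith

end Boundaries

lemma eventually_forall_abs_sub_mul_le {s : ℕ → ℝ} {p : ℝ}
    (h : Tendsto (fun k => s k / k) atTop (𝓝 p)) {ε : ℝ} (hε : 0 < ε) :
    ∀ᶠ n : ℕ in atTop, ∀ k ≤ n, |s k - p * k| ≤ ε * n := by
  obtain ⟨N, hN⟩ := eventually_atTop.1
    ((h.eventually (Metric.closedBall_mem_nhds p hε)).and (eventually_ge_atTop 1))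
  set C := ∑ k ∈ range N, |s k - p * k|
  filter_upwards [tendsto_natCast_atTop_atTop.eventually_ge_atTop (C / ε)] with n hn k hk
  rcases lt_or_ge k N with hkN | hkN
  · calc |s k - p * k| ≤ C :=
          single_le_sum (f := fun k => |s k - p * k|) (fun _ _ => abs_nonneg _) (mem_range.2 hkN)
      _ ≤ ε * n := (div_le_iff₀' hε).1 hn
  · obtain ⟨hdist, hk1⟩ := hN k hkN
    have hk0 : (0 : ℝ) < k := by exact_mod_cast hk1
    rw [Real.dist_eq] at hdist
    calc |s k - p * k| = |(k : ℝ)| * |s k / k - p| := by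
          rw [← abs_mul, mul_sub, mul_div_cancel₀ _ hk0.ne', mul_comm (k : ℝ) p]
      _ ≤ n * ε := by
          rw [abs_of_pos hk0]
          exact mul_le_mul (by exact_mod_cast hk) hdist (abs_nonneg _) n.cast_nonneg
      _ = ε * n := mul_comm _ _

section Approximation

variable {m n : ℕ} {ε : ℝ}

def CountsNear (Z : ℕ → Fin m) (p : Fin m → ℝ) (n : ℕ) (ε : ℝ) : Prop :=
  ∀ t, ∀ k ≤ n, |(letterCount Z t 0 k : ℝ) - p t * k| ≤ ε * n

lemma eventually_countsNear {Z : ℕ → Fin m} {p : Fin m → ℝ}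
    (h : ∀ t, Tendsto (fun k => (letterCount Z t 0 k : ℝ) / k) atTop (𝓝 (p t))) (hε : 0 < ε) :
    ∀ᶠ n in atTop, CountsNear Z p n ε :=
  eventually_all.2 fun t => eventually_forall_abs_sub_mul_le (h t) hε

lemma letterCount_add (Z : ℕ → Fin m) (t : Fin m) {k k' : ℕ} (hk : k ≤ k') :
    letterCount Z t 0 k + letterCount Z t k k' = letterCount Z t 0 k' := by
  simp only [letterCount, card_filter]
  exact sum_Ico_consecutive _ (Nat.zero_le k) hk

lemma CountsNear.abs_letterCount_sub_le {Z : ℕ → Fin m} {p : Fin m → ℝ}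
    (h : CountsNear Z p n ε) (t : Fin m) {k k' : ℕ} (hk : k ≤ k') (hk' : k' ≤ n) :
    |(letterCount Z t k k' : ℝ) - p t * (k' - k)| ≤ 2 * (ε * n) := by
  have hsplit : (letterCount Z t k k' : ℝ) = letterCount Z t 0 k' - letterCount Z t 0 k := by
    rw [← letterCount_add Z t hk]; push_cast; ring
  calc _ = |((letterCount Z t 0 k' : ℝ) - p t * k') - (letterCount Z t 0 k - p t * k)| := by
        rw [hsplit]; ring_nf
    _ ≤ _ := (abs_sub _ _).trans (by linarith [h t k' hk', h t k (hk.trans hk')])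

variable {X Y : ℕ → Fin m} {pX pY : Fin m → ℝ}

lemma abs_blockScore_sub_fobj_le (hX : CountsNear X pX n ε) (hY : CountsNear Y pY n ε)
    {a b : Fin (m + 1) → ℕ} (ha : Monotone a) (hb : Monotone b) (han : a (Fin.last m) ≤ n)
    (hbn : b (Fin.last m) ≤ n) :
    |(blockScore X Y a b : ℝ) - fobj pX pY (blockLengths a, blockLengths b)| ≤
      m * (2 * (ε * n)) := by
  have hblock : ∀ {c : Fin (m + 1) → ℕ}, Monotone c → c (Fin.last m) ≤ n →
      ∀ t : Fin m, c t.castSucc ≤ c t.succ ∧ c t.succ ≤ n := fun hc hcn t =>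
    ⟨hc Fin.castSucc_lt_succ.le, (hc (Fin.le_last _)).trans hcn⟩
  simp only [blockScore, fobj, Nat.cast_sum, Nat.cast_min, ← sum_sub_distrib]
  refine (abs_sum_le_sum_abs _ _).trans ?_
  calc _ ≤ ∑ _t : Fin m, 2 * (ε * n) := sum_le_sum fun t _ =>
        (abs_min_sub_min_le_max _ _ _ _).trans (max_le
          (hX.abs_letterCount_sub_le t (hblock ha han t).1 (hblock ha han t).2)
          (hY.abs_letterCount_sub_le t (hblock hb hbn t).1 (hblock hb hbn t).2))
    _ = m * (2 * (ε * n)) := by simp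

lemma LCI_le_mul_emax_add (hm : 0 < m) (hpX : ∀ i, 0 ≤ pX i) (hpY : ∀ i, 0 ≤ pY i)
    (hX : CountsNear X pX n ε) (hY : CountsNear Y pY n ε) (hn : 0 < n) :
    (LCI m n X Y : ℝ) ≤ n * emax pX pY + m * (2 * (ε * n)) := by
  obtain ⟨a, b, ha, hb, han, hbn, hle⟩ := exists_LCI_le_blockScore n X Y
  have happrox := abs_blockScore_sub_fobj_le (pX := pX) (pY := pY) hX hY ha hb han hbn
  calc (LCI m n X Y : ℝ) ≤ blockScore X Y a b := by exact_mod_cast hle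
    _ ≤ fobj pX pY (blockLengths a, blockLengths b) + m * (2 * (ε * n)) := by
        linarith [(abs_sub_le_iff.1 happrox).1]
    _ ≤ n * emax pX pY + m * (2 * (ε * n)) := by
        gcongr
        exact fobj_le_mul_emax hm hpX hpY (blockLengths_nonneg ha) (blockLengths_nonneg hb)
          (by exact_mod_cast hn) (sum_blockLengths_le han) (sum_blockLengths_le hbn)

lemma mul_fobj_sub_le_LCI (hpX : ∀ i, 0 ≤ pX i) (hpY : ∀ i, 0 ≤ pY i)
    {l : (Fin m → ℝ) × (Fin m → ℝ)} (hl : l ∈ Lam m ×ˢ Lam m)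
    (hX : CountsNear X pX n ε) (hY : CountsNear Y pY n ε) :
    n * fobj pX pY l - ∑ i, (pX i + pY i) - m * (2 * (ε * n)) ≤ LCI m n X Y := by
  obtain ⟨⟨hl0, hl1⟩, ⟨hl0', hl1'⟩⟩ := hl
  have ha := monotone_floorBoundary hl0 n
  have hb := monotone_floorBoundary hl0' n
  have han := (floorBoundary_last hl1 n).le
  have hbn := (floorBoundary_last hl1' n).le
  have happrox := abs_blockScore_sub_fobj_le (pX := pX) (pY := pY) hX hY ha hb han hbn
  calc _ ≤ fobj pX pY (blockLengths (floorBoundary l.1 n), blockLengths (floorBoundary l.2 n))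
        - m * (2 * (ε * n)) := by
        gcongr
        exact mul_fobj_sub_le_fobj hpX hpY n.cast_nonneg
          (mul_sub_one_le_blockLengths_floorBoundary hl0 n)
          (mul_sub_one_le_blockLengths_floorBoundary hl0' n)
    _ ≤ blockScore X Y (floorBoundary l.1 n) (floorBoundary l.2 n) := by
        linarith [(abs_sub_le_iff.1 happrox).2]
    _ ≤ LCI m n X Y := by exact_mod_cast blockScore_le_LCI ha hb han hbn

end Approximation

theorem tendsto_LCI_div_of_tendsto_letterCount_div {m : ℕ} (hm : 0 < m) {pX pY : Fin m → ℝ}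
    (hpX : ∀ i, 0 ≤ pX i) (hpY : ∀ i, 0 ≤ pY i) {X Y : ℕ → Fin m}
    (hX : ∀ t, Tendsto (fun k => (letterCount X t 0 k : ℝ) / k) atTop (𝓝 (pX t)))
    (hY : ∀ t, Tendsto (fun k => (letterCount Y t 0 k : ℝ) / k) atTop (𝓝 (pY t))) :
    Tendsto (fun n => (LCI m n X Y : ℝ) / n) atTop (𝓝 (emax pX pY)) := by
  have hnear : ∀ ε > 0, ∀ᶠ n in atTop, CountsNear X pX n ε ∧ CountsNear Y pY n ε ∧ 0 < n :=
    fun ε hε => (eventually_countsNear hX hε).and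
      ((eventually_countsNear hY hε).and (eventually_gt_atTop 0))
  refine tendsto_order.2 ⟨fun c hc => ?_, fun c hc => ?_⟩
  · obtain ⟨_, ⟨l, hl, rfl⟩, hcl⟩ :=
      exists_lt_of_lt_csSup (((Lam_nonempty hm).prod (Lam_nonempty hm)).image _) hc
    set η := fobj pX pY l - c
    have hη : 0 < η := sub_pos.2 hcl
    filter_upwards [hnear (η / (4 * m)) (by positivity), (tendsto_const_div_atTop_nhds_zero_nat
      (∑ i, (pX i + pY i))).eventually (gt_mem_nhds (half_pos hη))] with n ⟨hXn, hYn, hn⟩ hC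
    have hn' : (0 : ℝ) < n := by exact_mod_cast hn
    have herr : m * (2 * (η / (4 * m) * n)) = η / 2 * n := by field_simp; ring
    have hlow := mul_fobj_sub_le_LCI hpX hpY hl hXn hYn
    rw [div_lt_iff₀ hn'] at hC
    rw [lt_div_iff₀ hn']
    nlinarith
  · set η := c - emax pX pY
    have hη : 0 < η := sub_pos.2 hc
    filter_upwards [hnear (η / (4 * m)) (by positivity)] with n ⟨hXn, hYn, hn⟩
    have hn' : (0 : ℝ) < n := by exact_mod_cast hn
    have herr : m * (2 * (η / (4 * m) * n)) = η / 2 * n := by field_simp; ring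
    have hup := LCI_le_mul_emax_add hm hpX hpY hXn hYn hn
    rw [div_lt_iff₀ hn']
    nlinarith

section Probability

variable {Ω : Type*} [MeasurableSpace Ω] {P : Measure Ω} {m : ℕ}

lemma ae_tendsto_letterCount_div [IsFiniteMeasure P] {Z : ℕ → Ω → Fin m} {p : Fin m → ℝ}
    (hZ : ∀ k, Measurable (Z k)) (hlaw : ∀ k i, P (Z k ⁻¹' {i}) = ENNReal.ofReal (p i))
    (hindep : Pairwise fun k l => IndepFun (Z k) (Z l) P) {t : Fin m} (ht : 0 ≤ p t) :
    ∀ᵐ ω ∂P, Tendsto (fun k => (letterCount (Z · ω) t 0 k : ℝ) / k) atTop (𝓝 (p t)) := by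
  set g : Fin m → ℝ := ({t} : Set (Fin m)).indicator 1
  have hg : Measurable g := measurable_of_countable g
  have hident : ∀ k, IdentDistrib (Z k) (Z 0) P P := fun k =>
    ⟨(hZ k).aemeasurable, (hZ 0).aemeasurable, Measure.ext_iff_singleton.2 fun i => by
      rw [Measure.map_apply (hZ k) (measurableSet_singleton i),
        Measure.map_apply (hZ 0) (measurableSet_singleton i), hlaw, hlaw]⟩
  have hpre : g ∘ Z 0 = (Z 0 ⁻¹' {t}).indicator 1 := rfl
  have hmeas : MeasurableSet (Z 0 ⁻¹' {t}) := hZ 0 (measurableSet_singleton t)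
  have hmean : ∫ ω, (g ∘ Z 0) ω ∂P = p t := by
    rw [hpre, integral_indicator_one hmeas, measureReal_def, hlaw, ENNReal.toReal_ofReal ht]
  have hslln := strong_law_ae (fun k => g ∘ Z k) (hpre ▸ (integrable_const 1).indicator hmeas)
    (fun k l hkl => (hindep hkl).comp hg hg) fun k => (hident k).comp hg
  filter_upwards [hslln] with ω hω
  rw [hmean] at hω
  refine hω.congr fun k => ?_
  rw [smul_eq_mul, inv_mul_eq_div, letterCount, natCast_card_filter, ← range_eq_Ico]
  simp only [g, Function.comp_apply, Set.indicator_apply, Set.mem_singleton_iff, Pi.one_apply]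

lemma ae_tendsto_LCI_div [IsFiniteMeasure P] (hm : 0 < m) {pX pY : Fin m → ℝ}
    (hpX : ∀ i, 0 ≤ pX i) (hpY : ∀ i, 0 ≤ pY i) {X Y : ℕ → Ω → Fin m}
    (hXY : IIDPair P X Y pX pY) :
    ∀ᵐ ω ∂P, Tendsto (fun n => (LCI m n (X · ω) (Y · ω) : ℝ) / n) atTop (𝓝 (emax pX pY)) := by
  obtain ⟨hXm, hYm, hXlaw, hYlaw, hindep⟩ := hXY
  have hfreqX := ae_all_iff.2 fun t => ae_tendsto_letterCount_div hXm hXlaw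
    (fun k l hkl => hindep.indepFun (Sum.inl_injective.ne hkl)) (hpX t)
  have hfreqY := ae_all_iff.2 fun t => ae_tendsto_letterCount_div hYm hYlaw
    (fun k l hkl => hindep.indepFun (Sum.inr_injective.ne hkl)) (hpY t)
  filter_upwards [hfreqX, hfreqY] with ω hωX hωY
  exact tendsto_LCI_div_of_tendsto_letterCount_div hm hpX hpY hωX hωY

lemma measurable_LCI (hm : 0 < m) {X Y : ℕ → Ω → Fin m} (hX : ∀ k, Measurable (X k))
    (hY : ∀ k, Measurable (Y k)) (n : ℕ) : Measurable fun ω => LCI m n (X · ω) (Y · ω) := by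
  let extend (v : Fin n → Fin m) (k : ℕ) : Fin m := if h : k < n then v ⟨k, h⟩ else ⟨0, hm⟩
  have hfactor : (fun ω => LCI m n (X · ω) (Y · ω)) =
      (fun v : (Fin n → Fin m) × (Fin n → Fin m) => LCI m n (extend v.1) (extend v.2)) ∘
        fun ω => (fun k : Fin n => X k ω, fun k : Fin n => Y k ω) :=
    funext fun ω => LCI_congr (fun k hk => by simp [extend, hk]) fun k hk => by simp [extend, hk]
  rw [hfactor]
  exact (measurable_of_countable _).comp
    ((measurable_pi_lambda (fun ω (k : Fin n) => X k ω) fun k => hX k).prodMk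
      (measurable_pi_lambda (fun ω (k : Fin n) => Y k ω) fun k => hY k))

lemma tendsto_integral_LCI_div [IsProbabilityMeasure P] (hm : 0 < m) {X Y : ℕ → Ω → Fin m}
    (hX : ∀ k, Measurable (X k)) (hY : ∀ k, Measurable (Y k)) {e : ℝ}
    (hlim : ∀ᵐ ω ∂P, Tendsto (fun n => (LCI m n (X · ω) (Y · ω) : ℝ) / n) atTop (𝓝 e)) :
    Tendsto (fun n => (∫ ω, (LCI m n (X · ω) (Y · ω) : ℝ) ∂P) / n) atTop (𝓝 e) := by
  have hmeas : ∀ n, Measurable fun ω => (LCI m n (X · ω) (Y · ω) : ℝ) := fun n =>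
    measurable_from_nat.comp (measurable_LCI hm hX hY n)
  have hdom := tendsto_integral_of_dominated_convergence (fun _ => 1)
    (fun n => ((hmeas n).div_const (n : ℝ)).aestronglyMeasurable) (integrable_const 1)
    (fun n => ae_of_all _ fun ω => by
      rw [Real.norm_of_nonneg (by positivity)]
      exact div_le_one_of_le₀ (by exact_mod_cast LCI_le) n.cast_nonneg) hlim
  simpa [integral_div] using hdom

end Probability

theorem lci_div_n_tendsto_emax_general
    {Ω : Type*} [MeasurableSpace Ω]
    (P : Measure Ω) [IsProbabilityMeasure P]
    (m : ℕ) (hm : 2 ≤ m)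
    (pX pY : Fin m → ℝ)
    (hpX : ∀ i, 0 < pX i) (hpY : ∀ i, 0 < pY i)
    (X Y : ℕ → Ω → Fin m)
    (hXY : IIDPair P X Y pX pY) :
    (∀ᵐ ω ∂P, Tendsto
        (fun n => (LCI m n (fun k => X k ω) (fun k => Y k ω) : ℝ) / n) atTop
        (𝓝 (emax pX pY))) ∧
      Tendsto
        (fun n => (∫ ω, (LCI m n (fun k => X k ω) (fun k => Y k ω) : ℝ) ∂P) / n) atTop
        (𝓝 (emax pX pY)) := by
  have hm0 : 0 < m := by omega
  have hlim := ae_tendsto_LCI_div hm0 (fun i => (hpX i).le) (fun i => (hpY i).le) hXY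
  exact ⟨hlim, tendsto_integral_LCI_div hm0 hXY.1 hXY.2.1 hlim⟩

/-- `LCI_n / n` converges almost surely to `e_max`, and `E[LCI_n]/n → e_max`. -/
theorem lci_div_n_tendsto_emax
    {Ω : Type*} [MeasurableSpace Ω]
    (P : Measure Ω) [IsProbabilityMeasure P]
    (m : ℕ) (hm : 2 ≤ m)
    (pX pY : Fin m → ℝ)
    (hpX : ∀ i, 0 < pX i) (hpY : ∀ i, 0 < pY i)
    (hpXsum : ∑ i, pX i = 1) (hpYsum : ∑ i, pY i = 1)
    (X Y : ℕ → Ω → Fin m)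
    (hXY : IIDPair P X Y pX pY) :
    (∀ᵐ ω ∂P, Tendsto
        (fun n => (LCI m n (fun k => X k ω) (fun k => Y k ω) : ℝ) / n) atTop
        (𝓝 (emax pX pY))) ∧
      Tendsto
        (fun n => (∫ ω, (LCI m n (fun k => X k ω) (fun k => Y k ω) : ℝ) ∂P) / n) atTop
        (𝓝 (emax pX pY)) :=
  lci_div_n_tendsto_emax_general P m hm pX pY hpX hpY X Y hXY
end
end

section
/- The maximum of f over Λ² equals the maximum of φ over U: max_{λ∈Λ²} Σ_{i=1}^m min(p^X_i λ^X_i, p^Y_i λ^Y_i) = max_{u∈U} (u_1+…+u_m). -/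
open MeasureTheory ProbabilityTheory Filter Finset Topology

noncomputable section

attribute [local instance] Classical.propDecidable

/-- The maximum of `f` over `Λ²` equals the maximum of `φ(u) = Σ_i u_i` over `U`. -/
theorem emax_eq_sup_phi_over_U
    (m : ℕ) (hm : 2 ≤ m)
    (pX pY : Fin m → ℝ)
    (hpX : ∀ i, 0 < pX i) (hpY : ∀ i, 0 < pY i)
    (hpXsum : ∑ i, pX i = 1) (hpYsum : ∑ i, pY i = 1) :
    sSup (fobj pX pY '' (Lam m ×ˢ Lam m)) =
      sSup ((fun u : Fin m → ℝ => ∑ i, u i) '' Uset pX pY) := by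
  set A := fobj pX pY '' (Lam m ×ˢ Lam m) with hA
  set B := (fun u : Fin m → ℝ => ∑ i, u i) '' Uset pX pY with hB
  have hpXle1 : ∀ i, pX i ≤ 1 := fun i => hpXsum ▸
    Finset.single_le_sum (fun j _ => (hpX j).le) (Finset.mem_univ i)
  -- A ⊆ B
  have hAB : A ⊆ B := by
    rintro a ⟨l, ⟨hl1, hl2⟩, rfl⟩
    refine ⟨fun i => min (pX i * l.1 i) (pY i * l.2 i), ⟨?_, ?_, ?_⟩, rfl⟩
    · intro i
      exact le_min (mul_nonneg (hpX i).le (hl1.1 i)) (mul_nonneg (hpY i).le (hl2.1 i))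
    · calc ∑ i, min (pX i * l.1 i) (pY i * l.2 i) / pX i
          ≤ ∑ i, l.1 i := Finset.sum_le_sum fun i _ => by
            rw [div_le_iff₀ (hpX i)]
            exact (min_le_left _ _).trans_eq (mul_comm _ _)
        _ = 1 := hl1.2
    · calc ∑ i, min (pX i * l.1 i) (pY i * l.2 i) / pY i
          ≤ ∑ i, l.2 i := Finset.sum_le_sum fun i _ => by
            rw [div_le_iff₀ (hpY i)]
            exact (min_le_right _ _).trans_eq (mul_comm _ _)
        _ = 1 := hl2.2
  have hB_bdd : BddAbove B := by
    refine ⟨1, ?_⟩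
    rintro b ⟨u, ⟨hu0, huX, _⟩, rfl⟩
    calc ∑ i, u i ≤ ∑ i, u i / pX i := Finset.sum_le_sum fun i _ => by
          rw [le_div_iff₀ (hpX i)]
          calc u i * pX i ≤ u i * 1 := mul_le_mul_of_nonneg_left (hpXle1 i) (hu0 i)
            _ = u i := mul_one _
      _ ≤ 1 := huX
  have hA_bdd : BddAbove A := hB_bdd.mono hAB
  have hm0 : 0 < m := by omega
  have hA_ne : A.Nonempty := by
    refine ⟨fobj pX pY ((fun _ => (m : ℝ)⁻¹), (fun _ => (m : ℝ)⁻¹)), ⟨_, ⟨?_, ?_⟩, rfl⟩⟩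
    all_goals
      constructor
      · intro i; positivity
      · simp [Finset.sum_const, Finset.card_univ, mul_inv_cancel₀,
          (Nat.cast_pos.mpr hm0).ne']
  have hB_ne : B.Nonempty := hA_ne.mono hAB
  refine le_antisymm (csSup_le hA_ne fun a ha => le_csSup hB_bdd (hAB ha)) ?_
  refine csSup_le hB_ne ?_
  rintro b ⟨u, ⟨hu0, huX, huY⟩, rfl⟩
  -- build a pair of probability vectors dominating u
  set i0 : Fin m := ⟨0, hm0⟩
  set sX : ℝ := 1 - ∑ j, u j / pX j with hsX
  set sY : ℝ := 1 - ∑ j, u j / pY j with hsY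
  have hsX0 : 0 ≤ sX := by simp [hsX]; linarith
  have hsY0 : 0 ≤ sY := by simp [hsY]; linarith
  set l1 : Fin m → ℝ := fun i => u i / pX i + (if i = i0 then sX else 0) with hl1
  set l2 : Fin m → ℝ := fun i => u i / pY i + (if i = i0 then sY else 0) with hl2
  have hl1mem : l1 ∈ Lam m := by
    constructor
    · intro i
      have h1 : 0 ≤ u i / pX i := div_nonneg (hu0 i) (hpX i).le
      have h2 : 0 ≤ (if i = i0 then sX else 0) := by
        by_cases h : i = i0 <;> simp [h, hsX0]
      exact add_nonneg h1 h2
    · simp only [hl1, Finset.sum_add_distrib, Finset.sum_ite_eq' Finset.univ i0,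
        Finset.mem_univ, if_true]
      simp [hsX]
  have hl2mem : l2 ∈ Lam m := by
    constructor
    · intro i
      have h1 : 0 ≤ u i / pY i := div_nonneg (hu0 i) (hpY i).le
      have h2 : 0 ≤ (if i = i0 then sY else 0) := by
        by_cases h : i = i0 <;> simp [h, hsY0]
      exact add_nonneg h1 h2
    · simp only [hl2, Finset.sum_add_distrib, Finset.sum_ite_eq' Finset.univ i0,
        Finset.mem_univ, if_true]
      simp [hsY]
  have hfb : ∑ i, u i ≤ fobj pX pY (l1, l2) := by
    unfold fobj
    refine Finset.sum_le_sum fun i _ => le_min ?_ ?_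
    · have h1 : pX i * l1 i = u i + pX i * (if i = i0 then sX else 0) := by
        simp only [hl1, mul_add]
        rw [mul_div_cancel₀ _ (hpX i).ne']
      have h2 : 0 ≤ pX i * (if i = i0 then sX else 0) := by
        by_cases h : i = i0
        · simp only [h, if_pos rfl]; exact mul_nonneg (hpX _).le hsX0
        · simp [h]
      simp only [h1]; linarith
    · have h1 : pY i * l2 i = u i + pY i * (if i = i0 then sY else 0) := by
        simp only [hl2, mul_add]
        rw [mul_div_cancel₀ _ (hpY i).ne']
      have h2 : 0 ≤ pY i * (if i = i0 then sY else 0) := by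
        by_cases h : i = i0
        · simp only [h, if_pos rfl]; exact mul_nonneg (hpY _).le hsY0
        · simp [h]
      simp only [h1]; linarith
  exact hfb.trans (le_csSup hA_bdd ⟨(l1, l2), ⟨hl1mem, hl2mem⟩, rfl⟩)

end
end

section
/- In Case a), letting p^X_max = max_{i∈{1,…,m}} p^X_i, one has I = {i ∈ {1,…,m} : p^X_i = p^X_max} and e_max = p^X_max; moreover there exists i_1 ∈ I such that p^Y_{i_1} > p^X_max. -/
open MeasureTheory ProbabilityTheory Filter Finset Topology

noncomputable section

attribute [local instance] Classical.propDecidable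

set_option maxHeartbeats 2000000 in
/-- **Lemma 1.2**: in Case a), `I = {i : p^X_i = p^X_max}`, `e_max = p^X_max`, and there
exists `i₁ ∈ I` with `p^Y_{i₁} > p^X_max`. -/
theorem caseA_Iset_emax
    (m : ℕ) (hm : 2 ≤ m)
    (pX pY : Fin m → ℝ)
    (hpX : ∀ i, 0 < pX i) (hpY : ∀ i, 0 < pY i)
    (hpXsum : ∑ i, pX i = 1) (hpYsum : ∑ i, pY i = 1)
    (hCaseA : CaseA pX pY) :
    Iset pX pY = {i | pX i = pXmax pX} ∧
      emax pX pY = pXmax pX ∧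
      ∃ i₁ ∈ Iset pX pY, pXmax pX < pY i₁ := by
  classical
  have hne : Nonempty (Fin m) := ⟨⟨0, by omega⟩⟩
  set pmax := pXmax pX with hpmaxdef
  clear_value pmax
  have hple : ∀ i, pX i ≤ pmax := by
    intro i
    rw [hpmaxdef]
    unfold pXmax
    exact le_ciSup (Set.Finite.bddAbove (Set.finite_range pX)) i
  obtain ⟨istar, histar⟩ := Finite.exists_max pX
  have histar_eq : pX istar = pmax := by
    rw [hpmaxdef]
    unfold pXmax
    exact le_antisymm (le_ciSup (Set.Finite.bddAbove (Set.finite_range pX)) istar)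
      (ciSup_le histar)
  have hpmaxpos : 0 < pmax := lt_of_lt_of_le (hpX istar) (hple istar)
  -- f is bounded above by pmax on Λ²
  have hbound : ∀ l ∈ (Lam m ×ˢ Lam m), fobj pX pY l ≤ pmax := by
    rintro ⟨lx, ly⟩ ⟨⟨hlx0, hlx1⟩, -, -⟩
    calc fobj pX pY (lx, ly) ≤ ∑ i, pmax * lx i := by
          refine Finset.sum_le_sum fun i _ => ?_
          exact le_trans (min_le_left _ _) (mul_le_mul_of_nonneg_right (hple i) (hlx0 i))
      _ = pmax := by rw [← Finset.mul_sum, hlx1, mul_one]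
  have hbdd : BddAbove (fobj pX pY '' (Lam m ×ˢ Lam m)) := by
    refine ⟨pmax, ?_⟩
    rintro x ⟨l, hl, rfl⟩
    exact hbound l hl
  -- LP lemma : for u ∈ U, Σ u ≤ emax
  have hLP : ∀ u ∈ Uset pX pY, ∑ i, u i ≤ emax pX pY := by
    rintro u ⟨hu0, huX, huY⟩
    set i0 : Fin m := Classical.arbitrary (Fin m) with hi0
    clear_value i0
    set lx : Fin m → ℝ :=
      fun k => u k / pX k + if k = i0 then (1 - ∑ i, u i / pX i) else 0 with hlx
    clear_value lx
    set ly : Fin m → ℝ :=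
      fun k => u k / pY k + if k = i0 then (1 - ∑ i, u i / pY i) else 0 with hly
    clear_value ly
    have hmemgen : ∀ (p : Fin m → ℝ), (∀ i, 0 < p i) → (∑ i, u i / p i) ≤ 1 →
        (fun k => u k / p k + if k = i0 then (1 - ∑ i, u i / p i) else 0) ∈ Lam m := by
      intro p hp hsum
      constructor
      · intro i
        have h1 : 0 ≤ u i / p i := div_nonneg (hu0 i) (hp i).le
        have h2 : (0:ℝ) ≤ if i = i0 then (1 - ∑ i, u i / p i) else 0 := by
          split
          · linarith
          · exact le_rfl
        exact add_nonneg h1 h2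
      · simp only [Finset.sum_add_distrib, Finset.sum_ite_eq']
        simp
    have hlxmem : lx ∈ Lam m := by rw [hlx]; exact hmemgen pX hpX huX
    have hlymem : ly ∈ Lam m := by rw [hly]; exact hmemgen pY hpY huY
    have key : ∑ i, u i ≤ fobj pX pY (lx, ly) := by
      refine Finset.sum_le_sum fun i _ => ?_
      have h1 : u i ≤ pX i * lx i := by
        have hui : u i = pX i * (u i / pX i) := by
          rw [mul_div_cancel₀ _ (hpX i).ne']
        have h2 : (0:ℝ) ≤ if i = i0 then (1 - ∑ i, u i / pX i) else 0 := by
          split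
          · linarith
          · exact le_rfl
        have : pX i * lx i = pX i * (u i / pX i) + pX i * (if i = i0 then (1 - ∑ i, u i / pX i) else 0) := by
          simp [hlx, mul_add]
        nlinarith [mul_nonneg (hpX i).le h2]
      have h2 : u i ≤ pY i * ly i := by
        have hui : u i = pY i * (u i / pY i) := by
          rw [mul_div_cancel₀ _ (hpY i).ne']
        have h2' : (0:ℝ) ≤ if i = i0 then (1 - ∑ i, u i / pY i) else 0 := by
          split
          · linarith
          · exact le_rfl
        have : pY i * ly i = pY i * (u i / pY i) + pY i * (if i = i0 then (1 - ∑ i, u i / pY i) else 0) := by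
          simp [hly, mul_add]
        nlinarith [mul_nonneg (hpY i).le h2']
      exact le_min h1 h2
    exact key.trans (le_csSup hbdd ⟨(lx, ly), ⟨hlxmem, hlymem⟩, rfl⟩)
  -- Extract the Case a) maximizer
  obtain ⟨us, ⟨⟨hus0, husX, husY⟩, hussum⟩, husX1, husYlt⟩ := hCaseA
  -- emax ≤ pmax
  have hle1 : emax pX pY ≤ pmax := by
    refine csSup_le ?_ ?_
    · set l0 : Fin m → ℝ := fun k => if k = istar then (1:ℝ) else 0 with hl0def
      clear_value l0
      have hl0 : l0 ∈ Lam m := by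
        constructor
        · intro i
          simp only [hl0def]
          split <;> norm_num
        · simp [hl0def, Finset.sum_ite_eq']
      exact ⟨fobj pX pY (l0, l0), ⟨(l0, l0), ⟨hl0, hl0⟩, rfl⟩⟩
    · rintro x ⟨l, hl, rfl⟩
      exact hbound l hl
  -- emax = pmax
  have hemax : emax pX pY = pmax := by
    refine le_antisymm hle1 ?_
    by_contra hlt
    push_neg at hlt
    -- find j with u j > 0 and pX j < pmax
    have hsumlt : ∑ i, us i < ∑ i, pmax * (us i / pX i) := by
      rw [← Finset.mul_sum, husX1, mul_one, hussum]
      exact hlt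
    obtain ⟨j, -, hj⟩ := Finset.exists_lt_of_sum_lt hsumlt
    have htj : 0 < us j / pX j := by
      by_contra h
      push_neg at h
      nlinarith [hus0 j]
    have husj : 0 < us j := by
      by_contra h
      push_neg at h
      have : us j = 0 := le_antisymm h (hus0 j)
      rw [this] at htj
      simp at htj
    have hpXj : pX j < pmax := by
      have hj' : pX j * (us j / pX j) < pmax * (us j / pX j) := by
        rwa [mul_div_cancel₀ _ (hpX j).ne'] 
      exact lt_of_mul_lt_mul_right hj' htj.le
    have hij : istar ≠ j := by
      intro h
      rw [← h, histar_eq] at hpXj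
      exact lt_irrefl _ hpXj
    -- perturbation
    set b := pX istar / pY istar with hb
    clear_value b
    have hbpos : 0 < b := by rw [hb]; exact div_pos (hpX istar) (hpY istar)
    set δ := 1 - ∑ i, us i / pY i with hδ
    clear_value δ
    have hδpos : 0 < δ := by linarith
    set ε := min (us j / pX j) (δ / (b + 1)) with hε
    clear_value ε
    have hεpos : 0 < ε := by rw [hε]; exact lt_min htj (div_pos hδpos (by linarith))
    set u' : Fin m → ℝ := fun k =>
      us k + (if k = istar then ε * pX istar else 0) - (if k = j then ε * pX j else 0) with hu'
    clear_value u'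
    have hsplit : ∀ v : Fin m → ℝ,
        ∑ k, u' k / v k = (∑ k, us k / v k) + ε * pX istar / v istar - ε * pX j / v j := by
      intro v
      have : ∀ k, u' k / v k = us k / v k + (if k = istar then ε * pX istar / v k else 0)
          - (if k = j then ε * pX j / v k else 0) := by
        intro k
        by_cases h1 : k = istar
        · by_cases h2 : k = j
          · exact absurd (h1.symm.trans h2) hij
          · simp only [hu', if_pos h1, if_neg h2]
            ring
        · by_cases h2 : k = j
          · simp only [hu', if_neg h1, if_pos h2]
            ring
          · simp only [hu', if_neg h1, if_neg h2]
            ring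
      rw [Finset.sum_congr rfl (fun k _ => this k), Finset.sum_sub_distrib,
        Finset.sum_add_distrib, Finset.sum_ite_eq', Finset.sum_ite_eq']
      simp
    have hu'0 : ∀ k, 0 ≤ u' k := by
      intro k
      by_cases h1 : k = istar
      · have hkj : k ≠ j := by rw [h1]; exact hij
        simp only [hu', if_pos h1, if_neg hkj]
        have := mul_nonneg hεpos.le (hpX istar).le
        have := hus0 k
        linarith
      · by_cases h2 : k = j
        · simp only [hu', if_neg h1, if_pos h2]
          have hεle : ε ≤ us j / pX j := by rw [hε]; exact min_le_left _ _
          have h4 : ε * pX j ≤ us j := (le_div_iff₀ (hpX j)).mp hεle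
          rw [h2]
          linarith
        · simp only [hu', if_neg h1, if_neg h2]
          have := hus0 k
          linarith
    have hu'X : ∑ k, u' k / pX k ≤ 1 := by
      rw [hsplit pX, husX1, mul_div_assoc, div_self (hpX istar).ne', mul_div_assoc,
        div_self (hpX j).ne']
      norm_num
    have hu'Y : ∑ k, u' k / pY k ≤ 1 := by
      rw [hsplit pY]
      have h1 : ε * pX istar / pY istar = ε * b := by
        rw [hb]; ring
      have h2 : 0 ≤ ε * pX j / pY j :=
        div_nonneg (mul_nonneg hεpos.le (hpX j).le) (hpY j).le
      have h3 : ε ≤ δ / (b + 1) := by rw [hε]; exact min_le_right _ _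
      have h4 : ε * b ≤ δ / (b + 1) * b :=
        mul_le_mul_of_nonneg_right h3 hbpos.le
      have h5 : δ / (b + 1) * b < δ := by
        rw [div_mul_eq_mul_div, div_lt_iff₀ (by linarith : (0:ℝ) < b + 1)]
        nlinarith
      rw [h1]
      linarith
    have hu'sum : emax pX pY < ∑ k, u' k := by
      have := hsplit (fun _ => 1)
      simp only [div_one] at this
      rw [this, hussum]
      have : ε * pX j < ε * pX istar := by
        rw [histar_eq]
        exact mul_lt_mul_of_pos_left hpXj hεpos
      linarith
    exact absurd (hLP u' ⟨hu'0, hu'X, hu'Y⟩) (not_le.mpr hu'sum)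
  -- the special index i₁
  have hi1 : ∃ i₁, 0 < us i₁ ∧ pmax < pY i₁ := by
    by_contra h
    push_neg at h
    have hge : ∀ i, us i / pmax ≤ us i / pY i := by
      intro i
      rcases eq_or_lt_of_le (hus0 i) with h0 | h0
      · rw [← h0]; simp
      · exact div_le_div_of_nonneg_left (hus0 i) (hpY i) (h i h0)
    have : (1:ℝ) ≤ ∑ i, us i / pY i := by
      calc (1:ℝ) = ∑ i, us i / pmax := by
            rw [← Finset.sum_div, hussum, hemax, div_self hpmaxpos.ne']
        _ ≤ ∑ i, us i / pY i := Finset.sum_le_sum fun i _ => hge i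
    linarith
  obtain ⟨i₁, hi₁pos, hi₁Y⟩ := hi1
  have hi₁mem : i₁ ∈ Iset pX pY := ⟨us, ⟨⟨hus0, husX, husY⟩, hussum⟩, hi₁pos⟩
  -- I ⊆ argmax
  have hIsub : ∀ i ∈ Iset pX pY, pX i = pmax := by
    rintro i ⟨u, ⟨⟨hu0, huX, huY⟩, husum⟩, hui⟩
    by_contra hne'
    have hilt : pX i < pmax := lt_of_le_of_ne (hple i) hne'
    have hstrict : ∑ k, u k < ∑ k, pmax * (u k / pX k) := by
      refine Finset.sum_lt_sum (fun k _ => ?_) ⟨i, Finset.mem_univ i, ?_⟩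
      · calc u k = pX k * (u k / pX k) := by rw [mul_div_cancel₀ _ (hpX k).ne']
          _ ≤ pmax * (u k / pX k) :=
            mul_le_mul_of_nonneg_right (hple k) (div_nonneg (hu0 k) (hpX k).le)
      · calc u i = pX i * (u i / pX i) := by rw [mul_div_cancel₀ _ (hpX i).ne']
          _ < pmax * (u i / pX i) :=
            mul_lt_mul_of_pos_right hilt (div_pos hui (hpX i))
    have : ∑ k, pmax * (u k / pX k) ≤ pmax := by
      rw [← Finset.mul_sum]
      nlinarith
    rw [husum, hemax] at hstrict
    linarith
  have hpXi₁ : pX i₁ = pmax := hIsub i₁ hi₁mem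
  -- argmax ⊆ I
  have hIsup : ∀ i, pX i = pmax → i ∈ Iset pX pY := by
    intro i hi
    set b1 := pmax / pY i with hb1
    clear_value b1
    have hb1pos : 0 < b1 := by rw [hb1]; exact div_pos hpmaxpos (hpY i)
    set δ1 := 1 - pmax / pY i₁ with hδ1
    clear_value δ1
    have hδ1pos : 0 < δ1 := by
      have : pmax / pY i₁ < 1 := (div_lt_one (lt_trans hpmaxpos hi₁Y)).mpr hi₁Y
      linarith
    set t := min 1 (δ1 / (b1 + 1)) with ht
    clear_value t
    have htpos : 0 < t := by rw [ht]; exact lt_min one_pos (div_pos hδ1pos (by linarith))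
    have htle1 : t ≤ 1 := by rw [ht]; exact min_le_left _ _
    set u : Fin m → ℝ := fun k =>
      pmax * t * (if k = i then 1 else 0) + pmax * (1 - t) * (if k = i₁ then 1 else 0) with hu
    clear_value u
    have hsplit2 : ∀ v : Fin m → ℝ,
        ∑ k, u k / v k = pmax * t / v i + pmax * (1 - t) / v i₁ := by
      intro v
      have : ∀ k, u k / v k = (if k = i then pmax * t / v k else 0)
          + (if k = i₁ then pmax * (1 - t) / v k else 0) := by
        intro k
        by_cases h1 : k = i
        · by_cases h2 : k = i₁
          · simp only [hu, if_pos h1, if_pos h2]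
            ring
          · simp only [hu, if_pos h1, if_neg h2]
            ring
        · by_cases h2 : k = i₁
          · simp only [hu, if_neg h1, if_pos h2]
            ring
          · simp only [hu, if_neg h1, if_neg h2]
            ring
      rw [Finset.sum_congr rfl (fun k _ => this k), Finset.sum_add_distrib,
        Finset.sum_ite_eq', Finset.sum_ite_eq']
      simp
    have hu0 : ∀ k, 0 ≤ u k := by
      intro k
      have hi1' : (0:ℝ) ≤ (if k = i then (1:ℝ) else 0) := by split <;> norm_num
      have hi2' : (0:ℝ) ≤ (if k = i₁ then (1:ℝ) else 0) := by split <;> norm_num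
      have h1 : (0:ℝ) ≤ pmax * t := (mul_pos hpmaxpos htpos).le
      have h2 : (0:ℝ) ≤ pmax * (1 - t) := mul_nonneg hpmaxpos.le (by linarith)
      simp only [hu]
      nlinarith
    have huX : ∑ k, u k / pX k ≤ 1 := by
      rw [hsplit2 pX, hi, hpXi₁, mul_div_cancel_left₀ _ hpmaxpos.ne',
        mul_div_cancel_left₀ _ hpmaxpos.ne']
      linarith
    have huY : ∑ k, u k / pY k ≤ 1 := by
      rw [hsplit2 pY]
      have h1 : pmax * t / pY i = t * b1 := by rw [hb1]; ring
      have h2 : pmax * (1 - t) / pY i₁ ≤ pmax / pY i₁ := by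
        refine (div_le_div_iff_of_pos_right (hpY i₁)).mpr ?_
        nlinarith [mul_pos hpmaxpos htpos]
      have h3 : t ≤ δ1 / (b1 + 1) := by rw [ht]; exact min_le_right _ _
      have h4 : t * b1 ≤ δ1 / (b1 + 1) * b1 := mul_le_mul_of_nonneg_right h3 hb1pos.le
      have h5 : δ1 / (b1 + 1) * b1 ≤ δ1 := by
        rw [div_mul_eq_mul_div, div_le_iff₀ (by linarith : (0:ℝ) < b1 + 1)]
        nlinarith
      rw [h1]
      linarith
    have husum : ∑ k, u k = emax pX pY := by
      have := hsplit2 (fun _ => 1)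
      simp only [div_one] at this
      rw [this, hemax]
      ring
    have huipos : 0 < u i := by
      have h2 : (0:ℝ) ≤ pmax * (1 - t) * (if i = i₁ then 1 else 0) := by
        have h3 : (0:ℝ) ≤ (if i = i₁ then (1:ℝ) else 0) := by split <;> norm_num
        exact mul_nonneg (mul_nonneg hpmaxpos.le (by linarith)) h3
      have h1 : 0 < pmax * t := mul_pos hpmaxpos htpos
      simp only [hu, if_pos rfl, if_true, mul_one]
      linarith
    exact ⟨u, ⟨⟨hu0, huX, huY⟩, husum⟩, huipos⟩
  refine ⟨?_, hemax, i₁, hi₁mem, hi₁Y⟩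
  ext i
  exact ⟨fun h => hIsub i h, fun h => hIsup i h⟩


end
end

section
/- In Case b2), there exists a unique pair of real numbers (s,t) such that s·(1/p^X_i) + t·(1/p^Y_i) = 1 for every i ∈ I. -/
open MeasureTheory ProbabilityTheory Filter Finset Topology

noncomputable section

attribute [local instance] Classical.propDecidable

/-!
Averaging maximizers gives a `u ∈ L_U` that is positive on all of `I`. A direction `d` supported
on `I` with `Σ d_i/p^X_i = Σ d_i/p^Y_i = 0` can be added to `u` with a small factor of either sign
without leaving `U`; since every point of `U` has `Σ u_i ≤ e_max` (lift `u_i/p^X_i` and `u_i/p^Y_i`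
to points of `Λ`), maximality forces `Σ d_i = 0`. By duality the all-ones vector on `I` is then a
combination `s·(1/p^X) + t·(1/p^Y)`. For uniqueness, pairing the difference of two solutions with
`u`, which saturates both constraints in Case b), gives `Δs + Δt = 0`, and then
`Δs·(1/p^X_i - 1/p^Y_i) = 0` at an index of `I` where the two vectors differ.
-/

theorem exists_mul_add_mul_eq_of_forall_sum_mul_eq_zero {ι : Type*} [Fintype ι] (S : Set ι)
    (a b c : ι → ℝ)
    (h : ∀ d : ι → ℝ, (∀ j ∉ S, d j = 0) →
      ∑ j, d j * a j = 0 → ∑ j, d j * b j = 0 → ∑ j, d j * c j = 0) :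
    ∃ x y : ℝ, ∀ i ∈ S, x * a i + y * b i = c i := by
  let φ (v : ι → ℝ) : (ι → ℝ) →ₗ[ℝ] ℝ := ∑ j, S.indicator v j • LinearMap.proj j
  have hφ (v d : ι → ℝ) : φ v d = ∑ j, S.indicator d j * v j := by
    simp [φ, ← Set.indicator_mul_right, mul_comm]
  have hker : ⨅ k, LinearMap.ker (![φ a, φ b] k) ≤ LinearMap.ker (φ c) := by
    intro d hd
    simp only [Submodule.mem_iInf, Fin.forall_fin_two, LinearMap.mem_ker, Matrix.cons_val_zero,
      Matrix.cons_val_one, hφ] at hd ⊢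
    exact h _ (fun j hj => Set.indicator_of_notMem hj d) hd.1 hd.2
  obtain ⟨k, hk⟩ := (Submodule.mem_span_range_iff_exists_fun ℝ).1 (mem_span_of_iInf_ker_le_ker hker)
  refine ⟨k 0, k 1, fun i hi => ?_⟩
  simpa [Fin.sum_univ_two, φ, hi, Pi.single_apply] using LinearMap.congr_fun hk (Pi.single i 1)

theorem eq_of_mul_add_mul_eq {ι : Type*} [Fintype ι] {S : Set ι} {a b c u : ι → ℝ}
    (hu : ∀ j ∉ S, u j = 0) (hua : ∑ j, u j * a j = 1) (hub : ∑ j, u j * b j = 1)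
    {i₀ : ι} (hi₀ : i₀ ∈ S) (hab : a i₀ ≠ b i₀) {x y x' y' : ℝ}
    (h : ∀ i ∈ S, x * a i + y * b i = c i) (h' : ∀ i ∈ S, x' * a i + y' * b i = c i) :
    x = x' ∧ y = y' := by
  have hdiff : ∀ j, u j * ((x - x') * a j + (y - y') * b j) = 0 := fun j => by
    by_cases hj : j ∈ S
    · linear_combination u j * (h j hj - h' j hj)
    · simp [hu j hj]
  have hsum : (x - x') + (y - y') = 0 := by
    have := Finset.sum_eq_zero (s := Finset.univ) fun j _ => hdiff j
    simp only [mul_add, Finset.sum_add_distrib, mul_left_comm (u _), ← Finset.mul_sum, hua,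
      hub] at this
    linarith
  have hx : (x - x') * (a i₀ - b i₀) = 0 := by
    linear_combination h i₀ hi₀ - h' i₀ hi₀ - b i₀ * hsum
  have hx' : x = x' := sub_eq_zero.1 ((mul_eq_zero.1 hx).resolve_right (sub_ne_zero.2 hab))
  exact ⟨hx', by linarith⟩

theorem Convex.exists_mem_forall_pos {ι : Type*} [Fintype ι] [Nonempty ι] {C : Set (ι → ℝ)}
    (hC : Convex ℝ C) (hne : C.Nonempty) (hC₀ : ∀ v ∈ C, ∀ i, 0 ≤ v i) :
    ∃ u ∈ C, ∀ i, (∃ v ∈ C, 0 < v i) → 0 < u i := by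
  have hw : ∀ i, ∃ v ∈ C, (∃ v ∈ C, 0 < v i) → 0 < v i := fun i => by
    by_cases hi : ∃ v ∈ C, 0 < v i
    · obtain ⟨v, hv, hvi⟩ := hi
      exact ⟨v, hv, fun _ => hvi⟩
    · exact ⟨hne.some, hne.some_mem, fun h => absurd h hi⟩
  choose w hwC hwpos using hw
  have hn : (0 : ℝ) < Fintype.card ι := by exact_mod_cast Fintype.card_pos
  refine ⟨∑ k, (Fintype.card ι : ℝ)⁻¹ • w k, hC.sum_mem (fun _ _ => by positivity) ?_
    fun k _ => hwC k, fun i hi => ?_⟩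
  · simp [Finset.card_univ, hn.ne']
  · simp only [Finset.sum_apply, Pi.smul_apply, smul_eq_mul]
    exact Finset.sum_pos' (fun k _ => mul_nonneg (by positivity) (hC₀ _ (hwC k) i))
      ⟨i, Finset.mem_univ _, mul_pos (by positivity) (hwpos i hi)⟩

theorem exists_pos_forall_mul_abs_le {ι : Type*} [Finite ι] {u d : ι → ℝ} (hu : ∀ j, 0 ≤ u j)
    (hpos : ∀ j, d j ≠ 0 → 0 < u j) : ∃ ε > 0, ∀ j, ε * |d j| ≤ u j := by
  have hev : ∀ᶠ ε in 𝓝 (0 : ℝ), ∀ j, ε * |d j| ≤ u j := eventually_all.2 fun j => by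
    by_cases hd : d j = 0
    · simp [hd, hu j]
    have hlim : Tendsto (fun ε : ℝ => ε * |d j|) (𝓝 0) (𝓝 0) := by
      simpa using (tendsto_id (x := 𝓝 (0 : ℝ))).mul_const |d j|
    exact (hlim.eventually (gt_mem_nhds (hpos j hd))).mono fun _ => le_of_lt
  obtain ⟨ε, hε, hεpos⟩ :=
    ((hev.filter_mono (nhdsWithin_le_nhds (s := Set.Ioi 0))).and self_mem_nhdsWithin).exists
  exact ⟨ε, hεpos, hε⟩

section Maximizers

variable {m : ℕ} {pX pY : Fin m → ℝ}

theorem fobj_le_sum (hpX : ∀ i, 0 ≤ pX i) {l : (Fin m → ℝ) × (Fin m → ℝ)}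
    (hl : l ∈ Lam m ×ˢ Lam m) : fobj pX pY l ≤ ∑ i, pX i := by
  obtain ⟨⟨hX₀, hX₁⟩, -⟩ := hl
  refine Finset.sum_le_sum fun i _ => (min_le_left _ _).trans ?_
  exact mul_le_of_le_one_right (hpX i)
    (hX₁ ▸ Finset.single_le_sum (fun j _ => hX₀ j) (mem_univ i))

theorem exists_mem_Lam_le [NeZero m] {v : Fin m → ℝ} (hv₀ : ∀ i, 0 ≤ v i)
    (hv₁ : ∑ i, v i ≤ 1) : ∃ l ∈ Lam m, ∀ i, v i ≤ l i := by
  have hslack : 0 ≤ (Pi.single 0 (1 - ∑ i, v i) : Fin m → ℝ) := Pi.single_nonneg.2 (by linarith)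
  refine ⟨v + Pi.single 0 (1 - ∑ i, v i), ⟨fun i => add_nonneg (hv₀ i) (hslack i), ?_⟩,
    fun i => le_add_of_nonneg_right (hslack i)⟩
  simp [Finset.sum_add_distrib, Finset.sum_pi_single']

theorem sum_le_emax [NeZero m] (hpX : ∀ i, 0 < pX i) (hpY : ∀ i, 0 < pY i) {u : Fin m → ℝ}
    (hu : u ∈ Uset pX pY) : ∑ i, u i ≤ emax pX pY := by
  obtain ⟨hu₀, huX, huY⟩ := hu
  obtain ⟨lX, hlX, hleX⟩ := exists_mem_Lam_le (fun i => div_nonneg (hu₀ i) (hpX i).le) huX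
  obtain ⟨lY, hlY, hleY⟩ := exists_mem_Lam_le (fun i => div_nonneg (hu₀ i) (hpY i).le) huY
  calc ∑ i, u i ≤ fobj pX pY (lX, lY) := Finset.sum_le_sum fun i _ =>
        le_min ((div_le_iff₀' (hpX i)).1 (hleX i)) ((div_le_iff₀' (hpY i)).1 (hleY i))
    _ ≤ emax pX pY := le_csSup ⟨_, by rintro _ ⟨l, hl, rfl⟩; exact fobj_le_sum (hpX · |>.le) hl⟩
        ⟨_, ⟨hlX, hlY⟩, rfl⟩

theorem convex_LU : Convex ℝ (LU pX pY) := by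
  rintro u ⟨⟨hu₀, huX, huY⟩, hu⟩ v ⟨⟨hv₀, hvX, hvY⟩, hv⟩ a b ha hb hab
  have hlin (q : Fin m → ℝ) :
      ∑ i, (a • u + b • v) i / q i = a * ∑ i, u i / q i + b * ∑ i, v i / q i := by
    simp [add_div, mul_div_assoc, Finset.sum_add_distrib, Finset.mul_sum]
  refine ⟨⟨fun i => ?_, ?_, ?_⟩, ?_⟩
  · simpa using add_nonneg (mul_nonneg ha (hu₀ i)) (mul_nonneg hb (hv₀ i))
  · rw [hlin]; nlinarith
  · rw [hlin]; nlinarith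
  · simpa [Finset.sum_add_distrib, ← Finset.mul_sum, hu, hv] using
      by linear_combination (emax pX pY) * hab

theorem eq_zero_of_mem_LU_of_notMem_Iset {u : Fin m → ℝ} (hu : u ∈ LU pX pY) {j : Fin m}
    (hj : j ∉ Iset pX pY) : u j = 0 :=
  ((hu.1.1 j).eq_or_lt.resolve_right fun hpos => hj ⟨u, hu, hpos⟩).symm

theorem add_mem_Uset {u d : Fin m → ℝ} (hu : u ∈ Uset pX pY) (hd : ∀ j, |d j| ≤ u j)
    (hdX : ∑ j, d j / pX j = 0) (hdY : ∑ j, d j / pY j = 0) : u + d ∈ Uset pX pY := by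
  obtain ⟨hu₀, huX, huY⟩ := hu
  refine ⟨fun j => ?_, ?_, ?_⟩
  · show 0 ≤ u j + d j
    linarith [neg_le_of_abs_le (hd j)]
  · simpa [add_div, Finset.sum_add_distrib, hdX] using huX
  · simpa [add_div, Finset.sum_add_distrib, hdY] using huY

theorem sum_eq_zero_of_mem_LU (hmax : ∀ v ∈ Uset pX pY, ∑ i, v i ≤ emax pX pY)
    {u d : Fin m → ℝ} (hu : u ∈ LU pX pY) (hpos : ∀ j, d j ≠ 0 → 0 < u j)
    (hdX : ∑ j, d j / pX j = 0) (hdY : ∑ j, d j / pY j = 0) : ∑ j, d j = 0 := by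
  obtain ⟨ε, hε, hεd⟩ := exists_pos_forall_mul_abs_le hu.1.1 hpos
  have hmem (c : ℝ) (hc : |c| = ε) : u + c • d ∈ Uset pX pY :=
    add_mem_Uset hu.1 (fun j => by simpa [abs_mul, hc] using hεd j)
      (by simp [mul_div_assoc, ← Finset.mul_sum, hdX])
      (by simp [mul_div_assoc, ← Finset.mul_sum, hdY])
  have hplus := hmax _ (hmem ε (abs_of_pos hε))
  have hminus := hmax _ (hmem (-ε) (by simp [abs_of_pos hε]))
  simp only [Pi.add_apply, Pi.smul_apply, smul_eq_mul, Finset.sum_add_distrib, ← Finset.mul_sum,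
    hu.2] at hplus hminus
  have : ε * ∑ j, d j = 0 := by linarith
  exact (mul_eq_zero.1 this).resolve_left hε.ne'

end Maximizers

theorem caseB2_unique_st_general
    (m : ℕ)
    (pX pY : Fin m → ℝ)
    (hpX : ∀ i, 0 < pX i) (hpY : ∀ i, 0 < pY i)
    (hCaseB2 : CaseB2 pX pY) :
    ∃! st : ℝ × ℝ, ∀ i ∈ Iset pX pY, st.1 * (pX i)⁻¹ + st.2 * (pY i)⁻¹ = 1 := by
  obtain ⟨hB, hne⟩ := hCaseB2
  push Not at hne
  obtain ⟨i₀, hi₀, hi₀ne⟩ := hne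
  have : NeZero m := NeZero.of_pos i₀.pos
  obtain ⟨u, hu, hupos⟩ := convex_LU.exists_mem_forall_pos ⟨_, hi₀.choose_spec.1⟩
    fun v hv => hv.1.1
  have hsat (q : Fin m → ℝ) (hq : ∑ j, u j / q j = 1) : ∑ j, u j * (q j)⁻¹ = 1 := by
    simpa only [div_eq_mul_inv] using hq
  obtain ⟨s, t, hst⟩ := exists_mul_add_mul_eq_of_forall_sum_mul_eq_zero (Iset pX pY)
    (fun i => (pX i)⁻¹) (fun i => (pY i)⁻¹) 1 fun d hd hdX hdY => by
      simpa using sum_eq_zero_of_mem_LU (fun v => sum_le_emax hpX hpY) hu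
        (fun j hj => hupos j (by_contra fun hj' => hj (hd j hj')))
        (by simpa only [div_eq_mul_inv] using hdX) (by simpa only [div_eq_mul_inv] using hdY)
  refine ⟨(s, t), fun i hi => by simpa using hst i hi, fun ⟨s', t'⟩ h' => ?_⟩
  obtain ⟨hs, ht⟩ := eq_of_mul_add_mul_eq (fun j => eq_zero_of_mem_LU_of_notMem_Iset hu)
    (hsat _ (hB u hu).1) (hsat _ (hB u hu).2) hi₀ hi₀ne (c := 1)
    (fun i hi => by simpa using h' i hi) (fun i hi => by simpa using hst i hi)
  exact Prod.ext hs ht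

/-- **Lemma 1.3**: in Case b2) there is a unique pair of reals `(s, t)` with
`s/p^X_i + t/p^Y_i = 1` for every `i ∈ I`. -/
theorem caseB2_unique_st
    (m : ℕ) (hm : 2 ≤ m)
    (pX pY : Fin m → ℝ)
    (hpX : ∀ i, 0 < pX i) (hpY : ∀ i, 0 < pY i)
    (hpXsum : ∑ i, pX i = 1) (hpYsum : ∑ i, pY i = 1)
    (hCaseB2 : CaseB2 pX pY) :
    ∃! st : ℝ × ℝ, ∀ i ∈ Iset pX pY, st.1 * (pX i)⁻¹ + st.2 * (pY i)⁻¹ = 1 :=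
  caseB2_unique_st_general m pX pY hpX hpY hCaseB2
end
end

section
/- In Case b), for every ν = (ν^X,ν^Y) ∈ (ℝ^m)² with ν^X_i = ν^Y_i = 0 for all i ∉ I, the supremum over x ∈ E'×E' of Σ_{i=1}^m min(p^X_i x^X_i + ν^X_i, p^Y_i x^Y_i + ν^Y_i) is attained (so 𝔪(ν) is well defined), and 𝔪(ν) equals the maximum of the same expression restricted to x ∈ E'×E' with ‖x‖_∞ ≤ 2Cm‖ν‖_∞, where C > 0 is a constant depending only on p^X and p^Y (the constant of the projection lemma). -/
open MeasureTheory ProbabilityTheory Filter Finset Topology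

noncomputable section

attribute [local instance] Classical.propDecidable

/-!
`𝔪(ν)` is the value of a linear program. The dual of `max {∑ u : u ∈ U}` has an optimal solution
`(a, b)`, found by minimizing the convex piecewise affine function `a ↦ a + b_min(a)` on
`[0, ∞)`; its active pieces produce a primal `u` with `∑ u = a + b`, so `e_max = a + b`. In
Case b) every maximizer saturates both constraints of `U`, so complementary slackness makes
`a / p^X_i + b / p^Y_i = 1` for `i ∈ I`, and such a certificate bounds the objective of `𝔪(ν)`
by `a ∑ ν^X / p^X + b ∑ ν^Y / p^Y`. Moving the certificate along the segment of certificates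
tight at a fixed `j₀ ∈ I` to the endpoint minimizing this bound, either `b = 0` or a second
tight index `k` independent of `j₀` appears. The bound is then attained at a point whose
values `p^X x^X + ν^X = p^Y x^Y + ν^Y` are supported on `{j₀, k}` and solve a `2 × 2` system,
hence depend linearly on `ν`, which gives `‖x‖ = O(‖ν‖)`.
-/

open Asymptotics

lemma min_le_mul_add_mul {A B s t : ℝ} (hs : 0 ≤ s) (ht : 0 ≤ t)
    (h : min A B ≤ (s + t) * min A B) : min A B ≤ s * A + t * B := by
  nlinarith [mul_le_mul_of_nonneg_left (min_le_left A B) hs,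
    mul_le_mul_of_nonneg_left (min_le_right A B) ht]

lemma eventually_forall_lt_of_lt {κ X : Type*} [Finite κ] [TopologicalSpace X] {f : κ → X → ℝ}
    {x : X} (hf : ∀ k, ContinuousAt (f k) x) (M : ℝ) :
    ∀ᶠ y in 𝓝 x, ∀ k, f k x < M → f k y < M := by
  refine eventually_all.2 fun k => ?_
  by_cases h : f k x < M
  · exact ((hf k).eventually_lt continuousAt_const h).mono fun y hy _ => hy
  · exact Eventually.of_forall fun y h' => absurd h' h

section PiSingle

variable {ι : Type*} [DecidableEq ι]

lemma eq_or_eq_of_single_add_single_ne_zero {j k i : ι} {c d : ℝ}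
    (h : (Pi.single j c + Pi.single k d : ι → ℝ) i ≠ 0) : i = j ∨ i = k := by
  by_contra! hne
  simp [Pi.single_eq_of_ne hne.1, Pi.single_eq_of_ne hne.2] at h

variable [Fintype ι]

lemma sum_single_div (j : ι) (c : ℝ) (p : ι → ℝ) :
    ∑ i, (Pi.single j c : ι → ℝ) i / p i = c / p j := by
  rw [Finset.sum_eq_single j (fun i _ hi => by simp [hi]) (by simp), Pi.single_eq_same]

lemma sum_single_add_single_div (j k : ι) (c d : ℝ) (p : ι → ℝ) :
    ∑ i, (Pi.single j c + Pi.single k d : ι → ℝ) i / p i = c / p j + d / p k := by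
  simp only [Pi.add_apply, add_div, Finset.sum_add_distrib, sum_single_div]

end PiSingle

section DualCertificate

variable {ι : Type*} {pX pY : ι → ℝ} {J : Set ι} {a b : ℝ}

/-- `(a, b)` is feasible for the dual of `max {∑ u : u ∈ U}` and tight on `J`. -/
structure IsDualCert (pX pY : ι → ℝ) (J : Set ι) (a b : ℝ) : Prop where
  nonneg_left : 0 ≤ a
  nonneg_right : 0 ≤ b
  one_le : ∀ i, 1 ≤ a / pX i + b / pY i
  eq_one : ∀ i ∈ J, a / pX i + b / pY i = 1

lemma IsDualCert.swap (hd : IsDualCert pX pY J a b) : IsDualCert pY pX J b a :=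
  ⟨hd.nonneg_right, hd.nonneg_left, fun i => add_comm (a / pX i) _ ▸ hd.one_le i,
    fun i hi => add_comm (a / pX i) _ ▸ hd.eq_one i hi⟩

variable [Fintype ι]

lemma IsDualCert.sum_min_le (hd : IsDualCert pX pY J a b) (hpX : ∀ i, 0 < pX i)
    (hpY : ∀ i, 0 < pY i) {A B : ι → ℝ} (hAB : ∀ i ∉ J, 0 ≤ A i ∧ 0 ≤ B i) :
    ∑ i, min (A i) (B i) ≤ a * ∑ i, A i / pX i + b * ∑ i, B i / pY i := by
  calc ∑ i, min (A i) (B i) ≤ ∑ i, (a / pX i * A i + b / pY i * B i) := by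
        refine Finset.sum_le_sum fun i _ => min_le_mul_add_mul
          (div_nonneg hd.nonneg_left (hpX i).le) (div_nonneg hd.nonneg_right (hpY i).le) ?_
        by_cases hi : i ∈ J
        · rw [hd.eq_one i hi, one_mul]
        · exact le_mul_of_one_le_left (le_min (hAB i hi).1 (hAB i hi).2) (hd.one_le i)
    _ = a * ∑ i, A i / pX i + b * ∑ i, B i / pY i := by
        simp only [Finset.mul_sum, ← Finset.sum_add_distrib]
        exact Finset.sum_congr rfl fun i _ => by ring

lemma sum_eq_of_tight {u : ι → ℝ} (h : ∀ i, u i ≠ 0 → a / pX i + b / pY i = 1) :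
    ∑ i, u i = a * ∑ i, u i / pX i + b * ∑ i, u i / pY i := by
  simp only [Finset.mul_sum, ← Finset.sum_add_distrib]
  refine Finset.sum_congr rfl fun i _ => ?_
  by_cases hu : u i = 0
  · simp [hu]
  · calc u i = u i * (a / pX i + b / pY i) := by rw [h i hu, mul_one]
      _ = _ := by ring

end DualCertificate

section DualProblem

variable {ι : Type*} {pX pY : ι → ℝ}

def dualPiece (pX pY : ι → ℝ) : Option ι → ℝ → ℝ
  | none, a => a
  | some j, a => a + pY j * (1 - a / pX j)

lemma continuous_dualPiece (k : Option ι) : Continuous (dualPiece pX pY k) := by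
  cases k <;> unfold dualPiece <;> fun_prop

lemma div_add_dualPiece_sub_div (hpY : ∀ i, 0 < pY i) (j : ι) (a : ℝ) :
    a / pX j + (dualPiece pX pY (some j) a - a) / pY j = 1 := by
  simp only [dualPiece, add_sub_cancel_left, mul_div_cancel_left₀ _ (hpY j).ne']
  ring

lemma dualPiece_some_sub_mul (hpX : ∀ i, 0 < pX i) (j : ι) (a a' : ℝ) :
    (dualPiece pX pY (some j) a - dualPiece pX pY (some j) a') * pX j =
      (a - a') * (pX j - pY j) := by
  simp only [dualPiece]
  field_simp [(hpX j).ne']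
  ring

variable [Fintype ι]

/-- `dualObj a = a + b`, where `b` is the least `b ≥ 0` making `(a, b)` dual feasible. -/
def dualObj (pX pY : ι → ℝ) (a : ℝ) : ℝ :=
  Finset.univ.sup' Finset.univ_nonempty fun k => dualPiece pX pY k a

lemma continuous_dualObj : Continuous (dualObj pX pY) :=
  Continuous.finset_sup'_apply _ fun k _ => continuous_dualPiece k

lemma dualPiece_le_dualObj (k : Option ι) (a : ℝ) : dualPiece pX pY k a ≤ dualObj pX pY a :=
  Finset.le_sup' (fun k => dualPiece pX pY k a) (Finset.mem_univ k)

lemma exists_isMinOn_dualObj : ∃ α, 0 ≤ α ∧ IsMinOn (dualObj pX pY) (Set.Ici 0) α := by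
  have h0 : 0 ≤ dualObj pX pY 0 := dualPiece_le_dualObj none 0
  obtain ⟨α, hα, hmin⟩ := isCompact_Icc.exists_isMinOn (Set.nonempty_Icc.2 h0)
    (continuous_dualObj (pX := pX) (pY := pY)).continuousOn
  refine ⟨α, hα.1, fun a (ha : 0 ≤ a) => ?_⟩
  by_cases h : a ≤ dualObj pX pY 0
  · exact hmin ⟨ha, h⟩
  · calc dualObj pX pY α ≤ dualObj pX pY 0 := hmin ⟨le_rfl, h0⟩
      _ ≤ a := (not_le.1 h).le
      _ ≤ dualObj pX pY a := dualPiece_le_dualObj none a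

lemma isDualCert_dualObj (hpY : ∀ i, 0 < pY i) {α : ℝ} (hα : 0 ≤ α) :
    IsDualCert pX pY ∅ α (dualObj pX pY α - α) where
  nonneg_left := hα
  nonneg_right := sub_nonneg.2 (dualPiece_le_dualObj none α)
  one_le i := by
    rw [← div_add_dualPiece_sub_div hpY i α]
    gcongr
    · exact (hpY i).le
    · exact dualPiece_le_dualObj (some i) α
  eq_one i hi := absurd hi (Set.notMem_empty i)

lemma eventually_exists_active_dualPiece {α : ℝ}
    (hmin : IsMinOn (dualObj pX pY) (Set.Ici 0) α) :
    ∀ᶠ a in 𝓝 α, 0 ≤ a → ∃ k, dualPiece pX pY k α = dualObj pX pY α ∧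
      dualPiece pX pY k α ≤ dualPiece pX pY k a := by
  filter_upwards [eventually_forall_lt_of_lt
    (fun k => (continuous_dualPiece (pX := pX) (pY := pY) k).continuousAt) (dualObj pX pY α)]
    with a hstay ha
  obtain ⟨k, -, hk⟩ := Finset.exists_mem_eq_sup' Finset.univ_nonempty fun k => dualPiece pX pY k a
  have hle : dualObj pX pY α ≤ dualPiece pX pY k a := hk ▸ hmin (Set.mem_Ici.2 ha)
  have hact : dualPiece pX pY k α = dualObj pX pY α :=
    (dualPiece_le_dualObj k α).antisymm (not_lt.1 fun h => (hstay k h).not_ge hle)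
  exact ⟨k, hact, hact ▸ hle⟩

end DualProblem

section StrongDuality

variable {ι : Type*} [Fintype ι] {pX pY : ι → ℝ}

lemma eq_zero_or_exists_tight_of_isMinOn (hpX : ∀ i, 0 < pX i) (hpY : ∀ i, 0 < pY i) {α : ℝ}
    (hα : 0 ≤ α) (hmin : IsMinOn (dualObj pX pY) (Set.Ici 0) α) :
    dualObj pX pY α - α = 0 ∨
      ∃ j, α / pX j + (dualObj pX pY α - α) / pY j = 1 ∧ pY j ≤ pX j := by
  obtain ⟨a, ha, hαa⟩ := ((eventually_nhdsWithin_of_eventually_nhds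
    (eventually_exists_active_dualPiece hmin)).and
      (self_mem_nhdsWithin (s := Set.Ioi α))).exists
  obtain ⟨_ | j, hact, hle⟩ := ha (hα.trans (le_of_lt hαa))
  · left
    simp only [dualPiece] at hact
    linarith
  · right
    refine ⟨j, hact ▸ div_add_dualPiece_sub_div hpY j α, ?_⟩
    have h := dualPiece_some_sub_mul (pY := pY) hpX j a α
    have : 0 ≤ (a - α) * (pX j - pY j) := h ▸ mul_nonneg (by linarith) (hpX j).le
    linarith [nonneg_of_mul_nonneg_right this (sub_pos.2 hαa)]

lemma exists_tight_of_isMinOn_of_pos (hpX : ∀ i, 0 < pX i) (hpY : ∀ i, 0 < pY i) {α : ℝ}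
    (hα : 0 < α) (hmin : IsMinOn (dualObj pX pY) (Set.Ici 0) α) :
    ∃ k, α / pX k + (dualObj pX pY α - α) / pY k = 1 ∧ pX k ≤ pY k := by
  obtain ⟨a, ha, ha0, haα⟩ := ((eventually_nhdsWithin_of_eventually_nhds
    (eventually_exists_active_dualPiece hmin)).and (Ioo_mem_nhdsLT hα)).exists
  obtain ⟨_ | k, hact, hle⟩ := ha ha0.le
  · exact absurd hle (not_le.2 haα)
  · refine ⟨k, hact ▸ div_add_dualPiece_sub_div hpY k α, ?_⟩
    have h := dualPiece_some_sub_mul (pY := pY) hpX k a α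
    have : 0 ≤ (α - a) * (pY k - pX k) := by nlinarith [(hpX k).le]
    linarith [nonneg_of_mul_nonneg_right this (sub_pos.2 haα)]

variable [DecidableEq ι]

lemma exists_primal_of_tight_pair {a b c d : ℝ} {j k : ι} (hc : 0 ≤ c) (hd : 0 ≤ d)
    (hj : a / pX j + b / pY j = 1) (hk : a / pX k + b / pY k = 1)
    (hX : c / pX j + d / pX k ≤ 1) (hY : c / pY j + d / pY k ≤ 1)
    (hsat : a * (c / pX j + d / pX k) + b * (c / pY j + d / pY k) = a + b) :
    ∃ u : ι → ℝ, (∀ i, 0 ≤ u i) ∧ ∑ i, u i / pX i ≤ 1 ∧ ∑ i, u i / pY i ≤ 1 ∧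
      ∑ i, u i = a + b := by
  refine ⟨Pi.single j c + Pi.single k d,
    fun i => (add_nonneg (Pi.single_nonneg.2 hc) (Pi.single_nonneg.2 hd) : (0 : ι → ℝ) ≤ _) i,
    by rwa [sum_single_add_single_div],
    by rwa [sum_single_add_single_div], ?_⟩
  rw [sum_eq_of_tight (a := a) (b := b) (pX := pX) (pY := pY), sum_single_add_single_div,
    sum_single_add_single_div, hsat]
  intro i hi
  rcases eq_or_eq_of_single_add_single_ne_zero hi with rfl | rfl
  exacts [hj, hk]

theorem exists_isDualCert_and_primal (hpX : ∀ i, 0 < pX i) (hpY : ∀ i, 0 < pY i) :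
    ∃ a b, IsDualCert pX pY ∅ a b ∧ ∃ u : ι → ℝ, (∀ i, 0 ≤ u i) ∧ ∑ i, u i / pX i ≤ 1 ∧
      ∑ i, u i / pY i ≤ 1 ∧ ∑ i, u i = a + b := by
  obtain ⟨α, hα, hmin⟩ := exists_isMinOn_dualObj (pX := pX) (pY := pY)
  have hcert := isDualCert_dualObj (pX := pX) hpY hα
  have hright := eq_zero_or_exists_tight_of_isMinOn hpX hpY hα hmin
  have hleft := fun hαpos => exists_tight_of_isMinOn_of_pos hpX hpY (α := α) hαpos hmin
  generalize dualObj pX pY α - α = β at hcert hright hleft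
  refine ⟨α, β, hcert, ?_⟩
  rcases hright with hβ | ⟨j, hj, hjle⟩ <;> rcases hα.eq_or_lt with hα0 | hαpos
  · exact ⟨0, fun _ => le_rfl, by simp, by simp, by simp [hβ, ← hα0]⟩
  · obtain ⟨k, hk, hkle⟩ := hleft hαpos
    refine exists_primal_of_tight_pair (c := 0) (d := pX k) le_rfl (hpX k).le hk hk ?_ ?_ ?_
    · simp [div_self (hpX k).ne']
    · simpa using (div_le_one (hpY k)).2 hkle
    · simp [div_self (hpX k).ne', hβ]
  · refine exists_primal_of_tight_pair (c := pY j) (d := 0) (hpY j).le le_rfl hj hj ?_ ?_ ?_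
    · simpa using (div_le_one (hpX j)).2 hjle
    · simp [div_self (hpY j).ne']
    · simp [div_self (hpY j).ne', ← hα0]
  · obtain ⟨k, hk, hkle⟩ := hleft hαpos
    have hseg : (1 : ℝ) ∈ segment ℝ (pY j / pX j) (pY k / pX k) := by
      rw [segment_eq_Icc ((div_le_one (hpX j)).2 hjle |>.trans ((one_le_div (hpX k)).2 hkle))]
      exact ⟨(div_le_one (hpX j)).2 hjle, (one_le_div (hpX k)).2 hkle⟩
    obtain ⟨θ, φ, hθ, hφ, hθφ, hmix⟩ := hseg
    have hX : θ * pY j / pX j + φ * pY k / pX k = 1 := by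
      rw [← hmix, smul_eq_mul, smul_eq_mul, mul_div_assoc, mul_div_assoc]
    have hY : θ * pY j / pY j + φ * pY k / pY k = 1 := by
      rw [mul_div_cancel_right₀ _ (hpY j).ne', mul_div_cancel_right₀ _ (hpY k).ne', hθφ]
    refine exists_primal_of_tight_pair (mul_nonneg hθ (hpY j).le) (mul_nonneg hφ (hpY k).le)
      hj hk hX.le hY.le ?_
    rw [hX, hY, mul_one, mul_one]

end StrongDuality

section CaseB

variable {m : ℕ} {pX pY : Fin m → ℝ} {a b : ℝ}

lemma mem_Lam_of_sum_div_le (hm : 0 < m) {p u : Fin m → ℝ} (hp : ∀ i, 0 < p i)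
    (hu0 : ∀ i, 0 ≤ u i) (hu : ∑ i, u i / p i ≤ 1) :
    (fun i => u i / p i + (1 - ∑ j, u j / p j) / m) ∈ Lam m := by
  refine ⟨fun i => add_nonneg (div_nonneg (hu0 i) (hp i).le)
    (div_nonneg (sub_nonneg.2 hu) m.cast_nonneg), ?_⟩
  rw [Finset.sum_add_distrib, Finset.sum_const, Finset.card_univ, Fintype.card_fin, nsmul_eq_mul,
    mul_div_cancel₀ _ (by positivity)]
  ring

lemma le_mul_div_add {p u s : ℝ} (hp : 0 < p) (hs : 0 ≤ s) : u ≤ p * (u / p + s) := by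
  rw [mul_add, mul_div_cancel₀ _ hp.ne']
  exact le_add_of_nonneg_right (mul_nonneg hp.le hs)

lemma exists_mem_Lam_sum_le_fobj (hm : 0 < m) (hpX : ∀ i, 0 < pX i) (hpY : ∀ i, 0 < pY i)
    {u : Fin m → ℝ} (hu : u ∈ Uset pX pY) :
    ∃ l ∈ Lam m ×ˢ Lam m, ∑ i, u i ≤ fobj pX pY l := by
  have hslack : ∀ p : Fin m → ℝ, ∑ i, u i / p i ≤ 1 → 0 ≤ (1 - ∑ j, u j / p j) / m :=
    fun p h => div_nonneg (sub_nonneg.2 h) m.cast_nonneg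
  refine ⟨(_, _), ⟨mem_Lam_of_sum_div_le hm hpX hu.1 hu.2.1,
    mem_Lam_of_sum_div_le hm hpY hu.1 hu.2.2⟩, Finset.sum_le_sum fun i _ => le_min ?_ ?_⟩
  · exact le_mul_div_add (hpX i) (hslack pX hu.2.1)
  · exact le_mul_div_add (hpY i) (hslack pY hu.2.2)

lemma fobj_le_of_isDualCert (hpX : ∀ i, 0 < pX i) (hpY : ∀ i, 0 < pY i)
    (hd : IsDualCert pX pY ∅ a b) {l : (Fin m → ℝ) × (Fin m → ℝ)} (hl : l ∈ Lam m ×ˢ Lam m) :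
    fobj pX pY l ≤ a + b := by
  have h := hd.sum_min_le hpX hpY (A := fun i => pX i * l.1 i) (B := fun i => pY i * l.2 i)
    fun i _ => ⟨mul_nonneg (hpX i).le (hl.1.1 i), mul_nonneg (hpY i).le (hl.2.1 i)⟩
  simp only [mul_div_cancel_left₀ _ (hpX _).ne', mul_div_cancel_left₀ _ (hpY _).ne', hl.1.2,
    hl.2.2, mul_one] at h
  exact h

lemma emax_eq_of_isDualCert (hm : 0 < m) (hpX : ∀ i, 0 < pX i) (hpY : ∀ i, 0 < pY i)
    (hd : IsDualCert pX pY ∅ a b) {u : Fin m → ℝ} (hu : u ∈ Uset pX pY)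
    (hsum : ∑ i, u i = a + b) : emax pX pY = a + b := by
  obtain ⟨l, hl, hle⟩ := exists_mem_Lam_sum_le_fobj hm hpX hpY hu
  exact IsGreatest.csSup_eq ⟨⟨l, hl, (fobj_le_of_isDualCert hpX hpY hd hl).antisymm (hsum ▸ hle)⟩,
    Set.forall_mem_image.2 fun _ hl' => fobj_le_of_isDualCert hpX hpY hd hl'⟩

theorem exists_isDualCert_Iset (hm : 0 < m) (hpX : ∀ i, 0 < pX i) (hpY : ∀ i, 0 < pY i)
    (hB : CaseB pX pY) : ∃ a b, IsDualCert pX pY (Iset pX pY) a b := by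
  obtain ⟨a, b, hd, u, hu0, huX, huY, hsum⟩ := exists_isDualCert_and_primal hpX hpY
  have hemax := emax_eq_of_isDualCert hm hpX hpY hd ⟨hu0, huX, huY⟩ hsum
  refine ⟨a, b, hd.nonneg_left, hd.nonneg_right, hd.one_le, ?_⟩
  rintro i ⟨v, hv, hvi⟩
  obtain ⟨hvX, hvY⟩ := hB v hv
  have hslack : ∑ j, v j * (a / pX j + b / pY j - 1) = 0 := by
    calc ∑ j, v j * (a / pX j + b / pY j - 1)
        = a * ∑ j, v j / pX j + b * ∑ j, v j / pY j - ∑ j, v j := by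
          simp only [Finset.mul_sum, ← Finset.sum_add_distrib, ← Finset.sum_sub_distrib]
          exact Finset.sum_congr rfl fun j _ => by ring
      _ = 0 := by rw [hvX, hvY, hv.2, hemax]; ring
  have h := (Finset.sum_eq_zero_iff_of_nonneg fun j _ =>
    mul_nonneg (hv.1.1 j) (sub_nonneg.2 (hd.one_le j))).1 hslack i (Finset.mem_univ i)
  linarith [(mul_eq_zero.1 h).resolve_left hvi.ne']

end CaseB

section Primal

variable {ι : Type*} [Fintype ι] {pX pY : ι → ℝ} {J : Set ι} {a b : ℝ}
  {ν : (ι → ℝ) × (ι → ℝ)}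

def gain (pX pY : ι → ℝ) (ν x : (ι → ℝ) × (ι → ℝ)) : ℝ :=
  ∑ i, min (pX i * x.1 i + ν.1 i) (pY i * x.2 i + ν.2 i)

/-- The set `E'`, with an arbitrary `J` in place of `I`. -/
def admissible (J : Set ι) : Set (ι → ℝ) := {x | ∑ i, x i = 0 ∧ ∀ i ∉ J, 0 ≤ x i}

/-- The point `x` at which the two arguments of the `i`-th `min` in `gain pX pY ν x` are
`A i` and `B i`. -/
def pointOfValues (pX pY A B : ι → ℝ) (ν : (ι → ℝ) × (ι → ℝ)) : (ι → ℝ) × (ι → ℝ) :=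
  (fun i => (A i - ν.1 i) / pX i, fun i => (B i - ν.2 i) / pY i)

lemma sum_mul_add_div {p y w : ι → ℝ} (hp : ∀ i, 0 < p i) (hy : ∑ i, y i = 0) :
    ∑ i, (p i * y i + w i) / p i = ∑ i, w i / p i := by
  simp only [add_div, Finset.sum_add_distrib, mul_div_cancel_left₀ _ (hp _).ne', hy, zero_add]

lemma gain_le_of_isDualCert (hpX : ∀ i, 0 < pX i) (hpY : ∀ i, 0 < pY i)
    (hd : IsDualCert pX pY J a b) (hν : ∀ i ∉ J, ν.1 i = 0 ∧ ν.2 i = 0)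
    {y : (ι → ℝ) × (ι → ℝ)} (hy : y ∈ admissible J ×ˢ admissible J) :
    gain pX pY ν y ≤ a * ∑ i, ν.1 i / pX i + b * ∑ i, ν.2 i / pY i := by
  have h := hd.sum_min_le hpX hpY (A := fun i => pX i * y.1 i + ν.1 i)
    (B := fun i => pY i * y.2 i + ν.2 i) fun i hi => by
      simp only [(hν i hi).1, (hν i hi).2, add_zero]
      exact ⟨mul_nonneg (hpX i).le (hy.1.2 i hi), mul_nonneg (hpY i).le (hy.2.2 i hi)⟩
  rwa [sum_mul_add_div hpX hy.1.1, sum_mul_add_div hpY hy.2.1] at h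

lemma gain_pointOfValues (hpX : ∀ i, 0 < pX i) (hpY : ∀ i, 0 < pY i) (A B : ι → ℝ) :
    gain pX pY ν (pointOfValues pX pY A B ν) = ∑ i, min (A i) (B i) := by
  simp only [gain, pointOfValues, mul_div_cancel₀ _ (hpX _).ne', mul_div_cancel₀ _ (hpY _).ne',
    sub_add_cancel]

lemma pointOfValues_mem (hpX : ∀ i, 0 < pX i) (hpY : ∀ i, 0 < pY i)
    (hν : ∀ i ∉ J, ν.1 i = 0 ∧ ν.2 i = 0) {A B : ι → ℝ} (hAB : ∀ i ∉ J, 0 ≤ A i ∧ 0 ≤ B i)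
    (hA : ∑ i, A i / pX i = ∑ i, ν.1 i / pX i) (hB : ∑ i, B i / pY i = ∑ i, ν.2 i / pY i) :
    pointOfValues pX pY A B ν ∈ admissible J ×ˢ admissible J := by
  refine ⟨⟨?_, fun i hi => ?_⟩, ⟨?_, fun i hi => ?_⟩⟩
  · simp only [pointOfValues, sub_div, Finset.sum_sub_distrib, hA, sub_self]
  · simp only [pointOfValues, (hν i hi).1, sub_zero]
    exact div_nonneg (hAB i hi).1 (hpX i).le
  · simp only [pointOfValues, sub_div, Finset.sum_sub_distrib, hB, sub_self]
  · simp only [pointOfValues, (hν i hi).2, sub_zero]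
    exact div_nonneg (hAB i hi).2 (hpY i).le

lemma isMaxOn_pointOfValues (hpX : ∀ i, 0 < pX i) (hpY : ∀ i, 0 < pY i)
    (hd : IsDualCert pX pY J a b) (hν : ∀ i ∉ J, ν.1 i = 0 ∧ ν.2 i = 0) {A B : ι → ℝ}
    (hAB : ∀ i ∉ J, 0 ≤ A i ∧ 0 ≤ B i)
    (hA : ∑ i, A i / pX i = ∑ i, ν.1 i / pX i) (hB : ∑ i, B i / pY i = ∑ i, ν.2 i / pY i)
    (hval : ∑ i, min (A i) (B i) = a * ∑ i, ν.1 i / pX i + b * ∑ i, ν.2 i / pY i) :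
    pointOfValues pX pY A B ν ∈ admissible J ×ˢ admissible J ∧
      IsMaxOn (gain pX pY ν) (admissible J ×ˢ admissible J) (pointOfValues pX pY A B ν) :=
  ⟨pointOfValues_mem hpX hpY hν hAB hA hB, fun _ hy =>
    (gain_le_of_isDualCert hpX hpY hd hν hy).trans_eq (by rw [gain_pointOfValues hpX hpY, hval])⟩

lemma isMaxOn_pointOfValues_self (hpX : ∀ i, 0 < pX i) (hpY : ∀ i, 0 < pY i)
    (hd : IsDualCert pX pY J a b) (hν : ∀ i ∉ J, ν.1 i = 0 ∧ ν.2 i = 0) {w : ι → ℝ}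
    (hw : ∀ i, w i ≠ 0 → a / pX i + b / pY i = 1) (hw0 : ∀ i ∉ J, 0 ≤ w i)
    (hX : ∑ i, w i / pX i = ∑ i, ν.1 i / pX i) (hY : ∑ i, w i / pY i = ∑ i, ν.2 i / pY i) :
    pointOfValues pX pY w w ν ∈ admissible J ×ˢ admissible J ∧
      IsMaxOn (gain pX pY ν) (admissible J ×ˢ admissible J) (pointOfValues pX pY w w ν) :=
  isMaxOn_pointOfValues hpX hpY hd hν (fun i hi => ⟨hw0 i hi, hw0 i hi⟩) hX hY <| by
    simp only [min_self]
    rw [sum_eq_of_tight hw, hX, hY]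

end Primal

section BoundedMaximizers

variable {ι : Type*} [Fintype ι] {pX pY : ι → ℝ} {J : Set ι}
  {N N' : Set ((ι → ℝ) × (ι → ℝ))}

def HasBoundedMaximizers (pX pY : ι → ℝ) (J : Set ι) (N : Set ((ι → ℝ) × (ι → ℝ))) : Prop :=
  ∃ C > 0, ∀ ν ∈ N, ∃ x ∈ admissible J ×ˢ admissible J,
    IsMaxOn (gain pX pY ν) (admissible J ×ˢ admissible J) x ∧ ‖x‖ ≤ C * ‖ν‖

lemma HasBoundedMaximizers.mono (h : HasBoundedMaximizers pX pY J N) (hN : N' ⊆ N) :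
    HasBoundedMaximizers pX pY J N' :=
  let ⟨C, hC, hx⟩ := h
  ⟨C, hC, fun ν hν => hx ν (hN hν)⟩

lemma HasBoundedMaximizers.union (h : HasBoundedMaximizers pX pY J N)
    (h' : HasBoundedMaximizers pX pY J N') : HasBoundedMaximizers pX pY J (N ∪ N') := by
  obtain ⟨C, hC, hx⟩ := h
  obtain ⟨C', -, hx'⟩ := h'
  refine ⟨max C C', lt_max_of_lt_left hC, ?_⟩
  rintro ν (hν | hν)
  · obtain ⟨x, hxS, hmax, hnorm⟩ := hx ν hν
    exact ⟨x, hxS, hmax, hnorm.trans (by gcongr; exact le_max_left C C')⟩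
  · obtain ⟨x, hxS, hmax, hnorm⟩ := hx' ν hν
    exact ⟨x, hxS, hmax, hnorm.trans (by gcongr; exact le_max_right C C')⟩

lemma gain_swap (ν x : (ι → ℝ) × (ι → ℝ)) : gain pY pX ν.swap x.swap = gain pX pY ν x :=
  Finset.sum_congr rfl fun _ _ => min_comm _ _

lemma HasBoundedMaximizers.of_swap (h : HasBoundedMaximizers pY pX J N) :
    HasBoundedMaximizers pX pY J (Prod.swap ⁻¹' N) := by
  obtain ⟨C, hC, hx⟩ := h
  refine ⟨C, hC, fun ν hν => ?_⟩
  obtain ⟨x, ⟨hx₁, hx₂⟩, hmax, hnorm⟩ := hx ν.swap hν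
  refine ⟨x.swap, ⟨hx₂, hx₁⟩, fun y ⟨hy₁, hy₂⟩ => ?_, ?_⟩
  · show gain pX pY ν y ≤ gain pX pY ν x.swap
    rw [← gain_swap ν y, ← gain_swap ν x.swap, Prod.swap_swap]
    exact hmax ⟨hy₂, hy₁⟩
  · simpa only [Prod.norm_def, Prod.fst_swap, Prod.snd_swap, max_comm] using hnorm

lemma HasBoundedMaximizers.of_isBigO (f : (ι → ℝ) × (ι → ℝ) → (ι → ℝ) × (ι → ℝ))
    (hf : f =O[⊤] fun ν => ν)
    (hmax : ∀ ν ∈ N, f ν ∈ admissible J ×ˢ admissible J ∧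
      IsMaxOn (gain pX pY ν) (admissible J ×ˢ admissible J) (f ν)) :
    HasBoundedMaximizers pX pY J N := by
  obtain ⟨C, hC, hfC⟩ := hf.exists_pos
  exact ⟨C, hC, fun ν hν => ⟨f ν, (hmax ν hν).1, (hmax ν hν).2, isBigOWith_top.1 hfC ν⟩⟩

section IsBigO

variable {α : Type*} {l : Filter α} {g : α → (ι → ℝ) × (ι → ℝ)}

lemma isBigO_sum_div {f : α → ι → ℝ} (hf : f =O[l] g) (p : ι → ℝ) :
    (fun x => ∑ i, f x i / p i) =O[l] g := by
  simpa only [Finset.sum_fn, div_eq_inv_mul] using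
    IsBigO.sum (s := Finset.univ) fun i _ => (isBigO_pi.1 hf i).const_mul_left (p i)⁻¹

lemma isBigO_sum_fst_div (p : ι → ℝ) :
    (fun ν : (ι → ℝ) × (ι → ℝ) => ∑ i, ν.1 i / p i) =O[⊤] fun ν => ν :=
  isBigO_sum_div isBigO_fst_prod p

lemma isBigO_sum_snd_div (p : ι → ℝ) :
    (fun ν : (ι → ℝ) × (ι → ℝ) => ∑ i, ν.2 i / p i) =O[⊤] fun ν => ν :=
  isBigO_sum_div isBigO_snd_prod p

lemma isBigO_single [DecidableEq ι] {f : α → ℝ} (hf : f =O[l] g) (j : ι) :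
    (fun x => (Pi.single j (f x) : ι → ℝ)) =O[l] g :=
  isBigO_norm_left.1 (by simpa only [Pi.norm_single] using hf.norm_left)

lemma isBigO_pointOfValues {A B : (ι → ℝ) × (ι → ℝ) → ι → ℝ} (hA : A =O[⊤] fun ν => ν)
    (hB : B =O[⊤] fun ν => ν) :
    (fun ν => pointOfValues pX pY (A ν) (B ν) ν) =O[⊤] fun ν => ν := by
  have h₁ : (fun ν : (ι → ℝ) × (ι → ℝ) => ν.1) =O[⊤] fun ν => ν := isBigO_fst_prod
  have h₂ : (fun ν : (ι → ℝ) × (ι → ℝ) => ν.2) =O[⊤] fun ν => ν := isBigO_snd_prod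
  refine IsBigO.prod_left (isBigO_pi.2 fun i => ?_) (isBigO_pi.2 fun i => ?_)
  · simpa only [div_eq_inv_mul] using
      ((isBigO_pi.1 hA i).sub (isBigO_pi.1 h₁ i)).const_mul_left (pX i)⁻¹
  · simpa only [div_eq_inv_mul] using
      ((isBigO_pi.1 hB i).sub (isBigO_pi.1 h₂ i)).const_mul_left (pY i)⁻¹

end IsBigO

end BoundedMaximizers

section CertificateLine

variable {ι : Type*} {pX pY : ι → ℝ} {J : Set ι} {α β : ℝ} {j₀ : ι}

/-- The value `a / p^X_i + b / p^Y_i` of the `i`-th dual constraint at the certificate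
`(a, b) = (a, p^Y_{j₀} (1 - a / p^X_{j₀}))`, which is tight at `j₀`. -/
def lineConstraint (pX pY : ι → ℝ) (j₀ i : ι) (a : ℝ) : ℝ :=
  a / pX i + pY j₀ * (1 - a / pX j₀) / pY i

/-- The parameters `a` of the certificates on this line that are tight on `J`; the condition
`a ≤ p^X_{j₀}` is `b ≥ 0`, and `a ≥ 0` is not imposed. -/
def lineSegment (pX pY : ι → ℝ) (J : Set ι) (j₀ : ι) : Set ℝ :=
  {a | a ≤ pX j₀ ∧ (∀ i, 1 ≤ lineConstraint pX pY j₀ i a) ∧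
    ∀ i ∈ J, lineConstraint pX pY j₀ i a ≤ 1}

lemma continuous_lineConstraint (i : ι) : Continuous (lineConstraint pX pY j₀ i) := by
  unfold lineConstraint
  fun_prop

lemma lineConstraint_sub_mul (hpX : ∀ i, 0 < pX i) (hpY : ∀ i, 0 < pY i) (i : ι) (a a' : ℝ) :
    (lineConstraint pX pY j₀ i a - lineConstraint pX pY j₀ i a') * (pX j₀ * pX i * pY i) =
      (a - a') * (pX j₀ * pY i - pX i * pY j₀) := by
  unfold lineConstraint
  field_simp [(hpX i).ne', (hpY i).ne', (hpX j₀).ne']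
  ring

lemma isClosed_lineSegment : IsClosed (lineSegment pX pY J j₀) := by
  simp only [lineSegment, Set.ofPred_and, Set.ofPred_forall]
  exact isClosed_Iic.inter ((isClosed_iInter fun i => isClosed_le continuous_const
    (continuous_lineConstraint i)).inter (isClosed_iInter fun i => isClosed_iInter fun _ =>
      isClosed_le (continuous_lineConstraint i) continuous_const))

lemma isDualCert_of_mem_lineSegment (hpX : ∀ i, 0 < pX i) (hpY : ∀ i, 0 < pY i) {a : ℝ}
    (ha : a ∈ lineSegment pX pY J j₀) (ha0 : 0 ≤ a) :
    IsDualCert pX pY J a (pY j₀ * (1 - a / pX j₀)) :=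
  ⟨ha0, mul_nonneg (hpY j₀).le (sub_nonneg.2 ((div_le_one (hpX j₀)).2 ha.1)), ha.2.1,
    fun i hi => (ha.2.2 i hi).antisymm (ha.2.1 i)⟩

lemma IsDualCert.mem_lineSegment (hpX : ∀ i, 0 < pX i) (hpY : ∀ i, 0 < pY i)
    (hd : IsDualCert pX pY J α β) (hj₀ : j₀ ∈ J) : α ∈ lineSegment pX pY J j₀ := by
  have h₀ := hd.eq_one j₀ hj₀
  have hβ : β = pY j₀ * (1 - α / pX j₀) := by
    field_simp [(hpX j₀).ne', (hpY j₀).ne'] at h₀ ⊢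
    linarith
  refine ⟨(div_le_one (hpX j₀)).1 ?_, fun i => ?_, fun i hi => ?_⟩
  · linarith [div_nonneg hd.nonneg_right (hpY j₀).le]
  · simpa only [lineConstraint, ← hβ] using hd.one_le i
  · simp only [lineConstraint, ← hβ, hd.eq_one i hi, le_refl]

/-- Some constraint `k` blocks `a` from increasing past the largest point of the segment;
its direction `(1 / p^X_k, 1 / p^Y_k)` is then not proportional to that of `j₀`. -/
lemma exists_blocking_of_isGreatest [Finite ι] (hpX : ∀ i, 0 < pX i) (hpY : ∀ i, 0 < pY i) {a : ℝ}
    (ha : IsGreatest (lineSegment pX pY J j₀) a) (hlt : a < pX j₀) :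
    ∃ k, lineConstraint pX pY j₀ k a = 1 ∧ pX j₀ * pY k ≠ pX k * pY j₀ ∧
      (k ∉ J → pX j₀ * pY k < pX k * pY j₀) := by
  have hcont : ∀ i, ContinuousAt (lineConstraint pX pY j₀ i) a :=
    fun i => (continuous_lineConstraint i).continuousAt
  obtain ⟨a', ⟨hstay₁, hstay₂⟩, haa', ha'P⟩ := ((eventually_nhdsWithin_of_eventually_nhds
    ((eventually_forall_lt_of_lt (f := fun i a => 1 - lineConstraint pX pY j₀ i a)
      (fun i => continuousAt_const.sub (hcont i)) 0).and
    (eventually_forall_lt_of_lt (f := fun i a => lineConstraint pX pY j₀ i a - 1)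
      (fun i => (hcont i).sub continuousAt_const) 0))).and (Ioo_mem_nhdsGT hlt)).exists
  have hpos : ∀ k, 0 < pX j₀ * pX k * pY k := fun k => by
    have := hpX j₀; have := hpX k; have := hpY k; positivity
  have hout : a' ∉ lineSegment pX pY J j₀ := fun h => not_le.2 haa' (ha.2 h)
  simp only [lineSegment, Set.mem_ofPred_eq, not_and_or, not_forall, not_le] at hout
  rcases hout with h | ⟨k, hk⟩ | ⟨k, hkJ, hk⟩
  · exact absurd ha'P (not_lt.2 h.le)
  · have hact : lineConstraint pX pY j₀ k a = 1 :=
      (ha.1.2.1 k).antisymm' (by linarith [mt (hstay₁ k) (by linarith)])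
    have hslope := lineConstraint_sub_mul (j₀ := j₀) hpX hpY k a' a
    have hneg : pX j₀ * pY k - pX k * pY j₀ < 0 := neg_of_mul_neg_right
      (hslope ▸ mul_neg_of_neg_of_pos (by linarith) (hpos k)) (sub_pos.2 haa').le
    exact ⟨k, hact, by linarith, fun _ => by linarith⟩
  · have hact : lineConstraint pX pY j₀ k a = 1 :=
      (ha.1.2.2 k hkJ).antisymm (by linarith [mt (hstay₂ k) (by linarith)])
    have hslope := lineConstraint_sub_mul (j₀ := j₀) hpX hpY k a' a
    have hpos' : 0 < pX j₀ * pY k - pX k * pY j₀ := pos_of_mul_pos_right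
      (hslope ▸ mul_pos (by linarith) (hpos k)) (sub_pos.2 haa').le
    exact ⟨k, hact, by linarith, fun h => absurd hkJ h⟩

/-- The extreme certificate of the segment on the side of increasing `a`. -/
theorem IsDualCert.exists_extreme [Finite ι] (hpX : ∀ i, 0 < pX i) (hpY : ∀ i, 0 < pY i)
    (hd : IsDualCert pX pY J α β) (hj₀ : j₀ ∈ J) :
    ∃ a, IsDualCert pX pY J a (pY j₀ * (1 - a / pX j₀)) ∧
      (a = pX j₀ ∨ ∃ k, lineConstraint pX pY j₀ k a = 1 ∧
        pX j₀ * pY k ≠ pX k * pY j₀ ∧ (k ∉ J → pX j₀ * pY k < pX k * pY j₀)) := by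
  have hα := hd.mem_lineSegment hpX hpY hj₀
  have hbdd : BddAbove (lineSegment pX pY J j₀) := ⟨pX j₀, fun _ ha => ha.1⟩
  have hmax : IsGreatest (lineSegment pX pY J j₀) (sSup (lineSegment pX pY J j₀)) :=
    ⟨isClosed_lineSegment.csSup_mem ⟨α, hα⟩ hbdd, fun _ ha => le_csSup hbdd ha⟩
  refine ⟨_, isDualCert_of_mem_lineSegment hpX hpY hmax.1
    (hd.nonneg_left.trans (hmax.2 hα)), ?_⟩
  rcases hmax.1.1.eq_or_lt with h | hlt
  · exact .inl h
  · exact .inr (exists_blocking_of_isGreatest hpX hpY hmax hlt)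

end CertificateLine

section Core

variable {ι : Type*} [Fintype ι] [DecidableEq ι] {pX pY : ι → ℝ} {J : Set ι} {α β : ℝ}

lemma hasBoundedMaximizers_of_eq_zero (hpX : ∀ i, 0 < pX i) (hpY : ∀ i, 0 < pY i) {j₀ : ι}
    (hd : IsDualCert pX pY J (pX j₀) 0) (hj₀ : j₀ ∈ J) :
    HasBoundedMaximizers pX pY J {ν | (∀ i ∉ J, ν.1 i = 0 ∧ ν.2 i = 0) ∧
      pX j₀ * ∑ i, ν.1 i / pX i ≤ pY j₀ * ∑ i, ν.2 i / pY i} := by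
  refine .of_isBigO _ (isBigO_pointOfValues
    (isBigO_single ((isBigO_sum_fst_div pX).const_mul_left (pX j₀)) j₀)
    (isBigO_single ((isBigO_sum_snd_div pY).const_mul_left (pY j₀)) j₀))
    fun ν ⟨hν, hle⟩ => isMaxOn_pointOfValues hpX hpY hd hν (fun i hi => ?_) ?_ ?_ ?_
  · simp [Pi.single_eq_of_ne fun h : i = j₀ => hi (h ▸ hj₀)]
  · rw [sum_single_div, mul_div_cancel_left₀ _ (hpX j₀).ne']
  · rw [sum_single_div, mul_div_cancel_left₀ _ (hpY j₀).ne']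
  · rw [Finset.sum_congr rfl fun i _ => Pi.apply_single₂ (fun _ => min) (fun _ => min_self 0)
      j₀ _ _ i, Finset.sum_pi_single', if_pos (Finset.mem_univ _), min_eq_left hle, zero_mul,
      add_zero]

lemma hasBoundedMaximizers_of_tight_pair (hpX : ∀ i, 0 < pX i) (hpY : ∀ i, 0 < pY i)
    {a b : ℝ} {j₀ k : ι} (hd : IsDualCert pX pY J a b) (hj₀ : j₀ ∈ J)
    (hk : a / pX k + b / pY k = 1) (hdet : pX j₀ * pY k ≠ pX k * pY j₀)
    (hsign : k ∉ J → pX j₀ * pY k < pX k * pY j₀) :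
    HasBoundedMaximizers pX pY J {ν | (∀ i ∉ J, ν.1 i = 0 ∧ ν.2 i = 0) ∧
      pX j₀ * ∑ i, ν.1 i / pX i ≤ pY j₀ * ∑ i, ν.2 i / pY i} := by
  have hn₁ := isBigO_sum_fst_div (ι := ι) pX
  have hn₂ := isBigO_sum_snd_div (ι := ι) pY
  -- Cramer's rule: `s / p_{j₀} + t / p_k = ∑ i, ν i / p i` for `p = p^X` and `p = p^Y`
  obtain ⟨s, hs, rfl⟩ : ∃ s : (ι → ℝ) × (ι → ℝ) → ℝ, s =O[⊤] (fun ν => ν) ∧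
      s = fun ν => pX j₀ * pY j₀ / (pX k * pY j₀ - pX j₀ * pY k) *
        (pX k * ∑ i, ν.1 i / pX i - pY k * ∑ i, ν.2 i / pY i) :=
    ⟨_, ((hn₁.const_mul_left _).sub (hn₂.const_mul_left _)).const_mul_left _, rfl⟩
  obtain ⟨t, ht, rfl⟩ : ∃ t : (ι → ℝ) × (ι → ℝ) → ℝ, t =O[⊤] (fun ν => ν) ∧
      t = fun ν => pX k * pY k / (pX k * pY j₀ - pX j₀ * pY k) *
        (pY j₀ * ∑ i, ν.2 i / pY i - pX j₀ * ∑ i, ν.1 i / pX i) :=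
    ⟨_, ((hn₂.const_mul_left _).sub (hn₁.const_mul_left _)).const_mul_left _, rfl⟩
  have hw := (isBigO_single hs j₀).add (isBigO_single ht k)
  refine .of_isBigO _ (isBigO_pointOfValues hw hw) fun ν ⟨hν, hle⟩ =>
    isMaxOn_pointOfValues_self hpX hpY hd hν (fun i hi => ?_) (fun i hi => ?_) ?_ ?_
  · rcases eq_or_eq_of_single_add_single_ne_zero hi with rfl | rfl
    exacts [hd.eq_one _ hj₀, hk]
  · rw [Pi.add_apply, Pi.single_eq_of_ne fun h : i = j₀ => hi (h ▸ hj₀), zero_add]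
    rcases eq_or_ne i k with rfl | hik
    · rw [Pi.single_eq_same]
      exact mul_nonneg (div_nonneg (mul_pos (hpX i) (hpY i)).le (sub_pos.2 (hsign hi)).le)
        (sub_nonneg.2 hle)
    · rw [Pi.single_eq_of_ne hik]
  all_goals
    rw [sum_single_add_single_div]
    generalize ∑ i, ν.1 i / pX i = n₁
    generalize ∑ i, ν.2 i / pY i = n₂
    generalize hD : pX k * pY j₀ - pX j₀ * pY k = D
    have : D ≠ 0 := hD ▸ sub_ne_zero.2 hdet.symm
    field_simp [(hpX j₀).ne', (hpX k).ne', (hpY j₀).ne', (hpY k).ne']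
    rw [← hD]
    ring

theorem hasBoundedMaximizers_of_le (hpX : ∀ i, 0 < pX i) (hpY : ∀ i, 0 < pY i)
    (hd : IsDualCert pX pY J α β) {j₀ : ι} (hj₀ : j₀ ∈ J) :
    HasBoundedMaximizers pX pY J {ν | (∀ i ∉ J, ν.1 i = 0 ∧ ν.2 i = 0) ∧
      pX j₀ * ∑ i, ν.1 i / pX i ≤ pY j₀ * ∑ i, ν.2 i / pY i} := by
  obtain ⟨a, ha, rfl | ⟨k, hk, hdet, hsign⟩⟩ := hd.exists_extreme hpX hpY hj₀
  · rw [div_self (hpX j₀).ne', sub_self, mul_zero] at ha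
    exact hasBoundedMaximizers_of_eq_zero hpX hpY ha hj₀
  · exact hasBoundedMaximizers_of_tight_pair hpX hpY ha hj₀ hk hdet hsign

theorem hasBoundedMaximizers (hpX : ∀ i, 0 < pX i) (hpY : ∀ i, 0 < pY i)
    (hd : IsDualCert pX pY J α β) :
    HasBoundedMaximizers pX pY J {ν | ∀ i ∉ J, ν.1 i = 0 ∧ ν.2 i = 0} := by
  rcases J.eq_empty_or_nonempty with rfl | ⟨j₀, hj₀⟩
  · refine .of_isBigO _ (isBigO_pointOfValues (pX := pX) (pY := pY) (isBigO_zero _ _)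
      (isBigO_zero _ _)) fun ν hν => ?_
    obtain rfl : ν = 0 := Prod.ext (funext fun i => (hν i (Set.notMem_empty i)).1)
      (funext fun i => (hν i (Set.notMem_empty i)).2)
    exact isMaxOn_pointOfValues hpX hpY hd hν (fun _ _ => ⟨le_rfl, le_rfl⟩) (by simp) (by simp)
      (by simp)
  · refine ((hasBoundedMaximizers_of_le hpX hpY hd hj₀).union
      (hasBoundedMaximizers_of_le hpY hpX hd.swap hj₀).of_swap).mono fun ν hν => ?_
    rcases le_total (pX j₀ * ∑ i, ν.1 i / pX i) (pY j₀ * ∑ i, ν.2 i / pY i) with h | h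
    · exact .inl ⟨hν, h⟩
    · exact .inr ⟨fun i hi => (hν i hi).symm, h⟩

end Core

theorem mfrak_well_defined_and_local_general
    (m : ℕ) (hm : 2 ≤ m)
    (pX pY : Fin m → ℝ)
    (hpX : ∀ i, 0 < pX i) (hpY : ∀ i, 0 < pY i)
    (hCaseB : CaseB pX pY) :
    ∃ C : ℝ, 0 < C ∧
      ∀ ν : (Fin m → ℝ) × (Fin m → ℝ),
        (∀ i ∉ Iset pX pY, ν.1 i = 0 ∧ ν.2 i = 0) →
        (∃ x ∈ E'set pX pY ×ˢ E'set pX pY,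
          (∑ i, min (pX i * x.1 i + ν.1 i) (pY i * x.2 i + ν.2 i)) = mfrak pX pY ν) ∧
        mfrak pX pY ν =
          sSup ((fun x : (Fin m → ℝ) × (Fin m → ℝ) =>
              ∑ i, min (pX i * x.1 i + ν.1 i) (pY i * x.2 i + ν.2 i)) ''
            {x ∈ E'set pX pY ×ˢ E'set pX pY | ‖x‖ ≤ 2 * C * m * ‖ν‖}) := by
  obtain ⟨α, β, hd⟩ := exists_isDualCert_Iset (by omega) hpX hpY hCaseB
  obtain ⟨C, hC, hmax⟩ := hasBoundedMaximizers hpX hpY hd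
  refine ⟨C, hC, fun ν hν => ?_⟩
  obtain ⟨x, hx, hxmax, hxC⟩ := hmax ν hν
  have hball : ‖x‖ ≤ 2 * C * m * ‖ν‖ := by
    have : (2 : ℝ) ≤ m := by exact_mod_cast hm
    nlinarith [mul_nonneg (by linarith : (0 : ℝ) ≤ 2 * m - 1) (mul_nonneg hC.le (norm_nonneg ν))]
  have hsSup : ∀ S ⊆ E'set pX pY ×ˢ E'set pX pY, x ∈ S →
      sSup (gain pX pY ν '' S) = gain pX pY ν x :=
    fun S hS hxS => IsGreatest.csSup_eq
      ⟨Set.mem_image_of_mem _ hxS, Set.forall_mem_image.2 fun _ hy => hxmax (hS hy)⟩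
  exact ⟨⟨x, hx, (hsSup _ subset_rfl hx).symm⟩,
    (hsSup _ subset_rfl hx).trans
      (hsSup {x ∈ E'set pX pY ×ˢ E'set pX pY | ‖x‖ ≤ 2 * C * m * ‖ν‖} (fun _ hy => hy.1)
        ⟨hx, hball⟩).symm⟩

/-- **Lemma 1.4, first part**: in Case b), for every `ν` vanishing outside `I` the supremum
defining `𝔪(ν)` is attained, and it is already attained on the ball `‖x‖_∞ ≤ 2Cm‖ν‖_∞`
for some constant `C > 0` depending only on `p^X` and `p^Y`. -/
theorem mfrak_well_defined_and_local
    (m : ℕ) (hm : 2 ≤ m)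
    (pX pY : Fin m → ℝ)
    (hpX : ∀ i, 0 < pX i) (hpY : ∀ i, 0 < pY i)
    (hpXsum : ∑ i, pX i = 1) (hpYsum : ∑ i, pY i = 1)
    (hCaseB : CaseB pX pY) :
    ∃ C : ℝ, 0 < C ∧
      ∀ ν : (Fin m → ℝ) × (Fin m → ℝ),
        (∀ i ∉ Iset pX pY, ν.1 i = 0 ∧ ν.2 i = 0) →
        (∃ x ∈ E'set pX pY ×ˢ E'set pX pY,
          (∑ i, min (pX i * x.1 i + ν.1 i) (pY i * x.2 i + ν.2 i)) = mfrak pX pY ν) ∧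
        mfrak pX pY ν =
          sSup ((fun x : (Fin m → ℝ) × (Fin m → ℝ) =>
              ∑ i, min (pX i * x.1 i + ν.1 i) (pY i * x.2 i + ν.2 i)) ''
            {x ∈ E'set pX pY ×ˢ E'set pX pY | ‖x‖ ≤ 2 * C * m * ‖ν‖}) :=
  mfrak_well_defined_and_local_general m hm pX pY hpX hpY hCaseB
end
end
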